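/- arXiv:1512.07838 — 4 statements merged into one kernel-verified Lean document; each statement's English description precedes it below -/
import Mathlib

section
/- Let X be a finite-dimensional normed space, (x_i)_{i=1}^n a finite sequence of vectors in X, and (λ_i)_{i=1}^n real numbers with 0 ≤ λ_i ≤ 1 for each i. Then there exists a sequence (θ_i)_{i=1}^n with each θ_i ∈ {0,1} such that ‖∑_{i=1}^n (λ_i − θ_i) x_i‖ ≤ (dim X / 2) · max_i ‖x_i‖. -/
open scoped Classical

private lemma steinitz_aux (X : Type*) [AddCommGroup X] [Module ℝ X]
    [FiniteDimensional ℝ X] (n : ℕ) (x : Fin n → X) :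
    ∀ (k : ℕ) (μ : Fin n → ℝ), (∀ i, 0 ≤ μ i ∧ μ i ≤ 1) →
      (Finset.univ.filter (fun i => μ i ≠ 0 ∧ μ i ≠ 1)).card ≤ k →
      ∃ ν : Fin n → ℝ, (∀ i, 0 ≤ ν i ∧ ν i ≤ 1) ∧
        (∑ i, ν i • x i) = (∑ i, μ i • x i) ∧
        (Finset.univ.filter (fun i => ν i ≠ 0 ∧ ν i ≠ 1)).card ≤ Module.finrank ℝ X := by
  intro k
  induction k with
  | zero =>
    intro μ hμ hcard
    exact ⟨μ, hμ, rfl, le_trans hcard (Nat.zero_le _)⟩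
  | succ k ih =>
    intro μ hμ hcard
    set s := Finset.univ.filter (fun i => μ i ≠ 0 ∧ μ i ≠ 1) with hs
    by_cases hle : s.card ≤ Module.finrank ℝ X
    · exact ⟨μ, hμ, rfl, hle⟩
    push_neg at hle
    -- linear dependence among the fractional-index vectors
    have hdep : ¬ LinearIndependent ℝ (fun i : s => x i) := by
      intro h
      have h2 := h.fintype_card_le_finrank
      rw [Fintype.card_coe] at h2
      omega
    rw [Fintype.not_linearIndependent_iff] at hdep
    obtain ⟨g, hg0, i0, hgi0⟩ := hdep
    set c : Fin n → ℝ := fun i => if h : i ∈ s then g ⟨i, h⟩ else 0 with hc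
    have hcmem : ∀ i, c i ≠ 0 → i ∈ s := by
      intro i hi
      by_contra hnot
      exact hi (by simp [hc, dif_neg hnot])
    set T : Fin n → ℝ := fun i => if 0 < c i then (1 - μ i) / c i else (-μ i) / c i with hT
    have hTi : ∀ i, T i = if 0 < c i then (1 - μ i) / c i else (-μ i) / c i := fun i => rfl
    have hne : (Finset.univ.filter (fun i => c i ≠ 0)).Nonempty := by
      refine ⟨(i0 : Fin n), ?_⟩
      simp only [Finset.mem_filter, Finset.mem_univ, true_and]
      have : c (i0 : Fin n) = g i0 := by simp [hc, dif_pos i0.2]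
      rw [this]; exact hgi0
    obtain ⟨j, hjmem, hjmin⟩ := Finset.exists_min_image _ T hne
    have hcj : c j ≠ 0 := by simpa using (Finset.mem_filter.mp hjmem).2
    set t := T j with htdef
    have htle : ∀ i, c i ≠ 0 → t ≤ T i := by
      intro i hi
      exact hjmin i (by simp [hi])
    have ht0 : 0 ≤ t := by
      rw [htdef, hTi]
      by_cases hpos : 0 < c j
      · simp only [hpos, if_true]
        exact div_nonneg (by linarith [(hμ j).2]) hpos.le
      · simp only [hpos, if_false]
        have hneg : c j < 0 := lt_of_le_of_ne (not_lt.mp hpos) hcj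
        rw [div_nonneg_iff]
        right
        exact ⟨by linarith [(hμ j).1], hneg.le⟩
    set ν : Fin n → ℝ := fun i => μ i + t * c i with hν
    have hbound : ∀ i, 0 ≤ ν i ∧ ν i ≤ 1 := by
      intro i
      rcases eq_or_ne (c i) 0 with h0 | h0
      · simpa [hν, h0] using hμ i
      by_cases hpos : 0 < c i
      · have h1 : t ≤ (1 - μ i) / c i := by
          have := htle i h0
          rwa [hTi, if_pos hpos] at this
        have h2 : t * c i ≤ 1 - μ i := (le_div_iff₀ hpos).mp h1
        have h3 : 0 ≤ t * c i := mul_nonneg ht0 hpos.le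
        constructor <;> simp only [hν] <;> [linarith [(hμ i).1]; linarith]
      · have hneg : c i < 0 := lt_of_le_of_ne (not_lt.mp hpos) h0
        have h1 : t ≤ (-μ i) / c i := by
          have := htle i h0
          rwa [hTi, if_neg hpos] at this
        have h2 : (-μ i) / c i * c i ≤ t * c i := mul_le_mul_of_nonpos_right h1 hneg.le
        rw [div_mul_cancel₀ _ h0] at h2
        have h3 : t * c i ≤ 0 := mul_nonpos_of_nonneg_of_nonpos ht0 hneg.le
        constructor <;> simp only [hν] <;> [linarith; linarith [(hμ i).2]]
    have hνj : ν j = 0 ∨ ν j = 1 := by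
      by_cases hpos : 0 < c j
      · right
        have : t = (1 - μ j) / c j := by rw [htdef, hTi, if_pos hpos]
        simp only [hν, this, div_mul_cancel₀ _ hcj]; ring
      · left
        have : t = (-μ j) / c j := by rw [htdef, hTi, if_neg hpos]
        simp only [hν, this, div_mul_cancel₀ _ hcj]; ring
    have hcsum : ∑ i, c i • x i = 0 := by
      have h1 : ∑ i, c i • x i = ∑ i ∈ s, c i • x i :=
        (Finset.sum_subset s.subset_univ (fun i _ hi => by simp [hc, dif_neg hi])).symm
      rw [h1, ← Finset.sum_attach s (fun i => c i • x i)]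
      calc ∑ i ∈ s.attach, c (i : Fin n) • x (i : Fin n)
          = ∑ i ∈ s.attach, g i • x (i : Fin n) :=
            Finset.sum_congr rfl (fun i _ => by simp [hc, dif_pos i.2])
        _ = 0 := by rw [← Finset.univ_eq_attach]; exact hg0
    have hsum : ∑ i, ν i • x i = ∑ i, μ i • x i := by
      have : ∑ i, ν i • x i = ∑ i, μ i • x i + t • ∑ i, c i • x i := by
        simp only [hν, add_smul, Finset.sum_add_distrib, mul_smul, ← Finset.smul_sum]
      rw [this, hcsum, smul_zero, add_zero]
    have hjs : j ∈ s := hcmem j hcj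
    have hsub : Finset.univ.filter (fun i => ν i ≠ 0 ∧ ν i ≠ 1) ⊆ s.erase j := by
      intro i hi
      simp only [Finset.mem_filter, Finset.mem_univ, true_and] at hi
      rw [Finset.mem_erase]
      constructor
      · rintro rfl
        rcases hνj with h | h
        · exact hi.1 h
        · exact hi.2 h
      · by_contra hnot
        have hci : c i = 0 := by simp [hc, dif_neg hnot]
        have : ν i = μ i := by simp [hν, hci]
        rw [this] at hi
        rw [hs] at hnot
        simp only [Finset.mem_filter, Finset.mem_univ, true_and] at hnot
        exact hnot hi
    have hcard' : (Finset.univ.filter (fun i => ν i ≠ 0 ∧ ν i ≠ 1)).card ≤ k := by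
      have h1 := Finset.card_le_card hsub
      have h2 := Finset.card_erase_of_mem hjs
      have h3 : 1 ≤ s.card := Finset.card_pos.mpr ⟨j, hjs⟩
      omega
    obtain ⟨ν', hb', hs', hc'⟩ := ih ν hbound hcard'
    exact ⟨ν', hb', hs'.trans hsum, hc'⟩

/-- The rounding (Steinitz-type) lemma: coefficients `0 ≤ λᵢ ≤ 1` can be rounded to
`θᵢ ∈ {0,1}` with error at most `(dim X / 2) · maxᵢ ‖xᵢ‖`. -/
theorem stmt_0 (X : Type*) [NormedAddCommGroup X] [NormedSpace ℝ X]
    [FiniteDimensional ℝ X] (n : ℕ) (x : Fin n → X) (lam : Fin n → ℝ)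
    (hlam : ∀ i, 0 ≤ lam i ∧ lam i ≤ 1) :
    ∃ θ : Fin n → ℝ, (∀ i, θ i = 0 ∨ θ i = 1) ∧
      ‖∑ i, (lam i - θ i) • x i‖ ≤
        ((Module.finrank ℝ X : ℝ) / 2) * ⨆ i, ‖x i‖ := by
  obtain ⟨ν, hb, hsum, hcard⟩ := steinitz_aux X n x n lam hlam
    (le_trans (Finset.card_filter_le _ _) (by simp))
  set d := Module.finrank ℝ X with hd
  set M := ⨆ i, ‖x i‖ with hM
  have hM0 : 0 ≤ M := Real.iSup_nonneg (fun i => norm_nonneg _)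
  have hMle : ∀ i, ‖x i‖ ≤ M := fun i => by
    rw [hM]
    exact le_ciSup (Set.Finite.bddAbove (Set.finite_range (fun i => ‖x i‖))) i
  refine ⟨fun i => if ν i < 1/2 then 0 else 1, fun i => by
    by_cases h : ν i < 1/2
    · exact Or.inl (if_pos h)
    · exact Or.inr (if_neg h), ?_⟩
  set θ : Fin n → ℝ := fun i => if ν i < 1/2 then 0 else 1 with hθ
  have hrw : ∑ i, (lam i - θ i) • x i = ∑ i, (ν i - θ i) • x i := by
    simp only [sub_smul, Finset.sum_sub_distrib, hsum]
  rw [hrw]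
  set F := Finset.univ.filter (fun i => ν i ≠ 0 ∧ ν i ≠ 1) with hF
  have hterm : ∀ i ∈ Finset.univ, i ∉ F → (ν i - θ i) • x i = 0 := by
    intro i _ hi
    simp only [hF, Finset.mem_filter, Finset.mem_univ, true_and, not_and_or, not_not] at hi
    rcases hi with h | h
    · have : θ i = 0 := by norm_num [hθ, h]
      simp [this, h]
    · have : θ i = 1 := by norm_num [hθ, h]
      simp [this, h]
  rw [← Finset.sum_subset F.subset_univ hterm]
  have hper : ∀ i ∈ F, ‖(ν i - θ i) • x i‖ ≤ 1/2 * M := by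
    intro i _
    rw [norm_smul, Real.norm_eq_abs]
    have habs : |ν i - θ i| ≤ 1/2 := by
      by_cases h : ν i < 1/2
      · simp only [hθ, if_pos h]
        rw [sub_zero, abs_of_nonneg (hb i).1]
        linarith
      · simp only [hθ, if_neg h]
        rw [abs_of_nonpos (by linarith [(hb i).2])]
        push_neg at h
        linarith
    exact mul_le_mul habs (hMle i) (norm_nonneg _) (by norm_num)
  calc ‖∑ i ∈ F, (ν i - θ i) • x i‖
      ≤ ∑ i ∈ F, ‖(ν i - θ i) • x i‖ := norm_sum_le _ _
    _ ≤ ∑ _i ∈ F, 1/2 * M := Finset.sum_le_sum hper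
    _ = F.card * (1/2 * M) := by rw [Finset.sum_const, nsmul_eq_mul]
    _ ≤ d * (1/2 * M) := by
        apply mul_le_mul_of_nonneg_right _ (by positivity)
        exact_mod_cast hcard
    _ = (d : ℝ) / 2 * M := by ring
end

section
/- Let (Ω, Σ, μ) be a finite atomless measure space, X a Köthe F-space on (Ω, Σ, μ), Z the set of all signs in X, Y an F-space, T_1 : X → Y a continuous linear narrow operator, and T_2 : X → Y a continuous linear operator such that T_2(Z) is relatively compact in Y and lim_{μ(A)→0} ‖T_2 1_A‖ = 0. Then T_1 + T_2 is a narrow operator. -/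
open MeasureTheory

/-- A measure is atomless if every set of positive measure has a subset of
strictly smaller positive measure. -/
def Atomless {Ω : Type*} [MeasurableSpace Ω] (μ : Measure Ω) : Prop :=
  ∀ A : Set Ω, MeasurableSet A → 0 < μ A →
    ∃ B : Set Ω, B ⊆ A ∧ MeasurableSet B ∧ 0 < μ B ∧ μ B < μ A

/-- The structure of an F-space (complete invariant-metric linear space) on a real
vector space `Y`, encoded via its F-norm. -/
structure FSpaceNorm (Y : Type*) [AddCommGroup Y] [Module ℝ Y] : Type _ where
  norm : Y → ℝ
  nonneg : ∀ y, 0 ≤ norm y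
  eq_zero_iff : ∀ y, norm y = 0 ↔ y = 0
  neg : ∀ y, norm (-y) = norm y
  add_le : ∀ y z, norm (y + z) ≤ norm y + norm z
  smul_le : ∀ (a : ℝ) (y : Y), |a| ≤ 1 → norm (a • y) ≤ norm y
  smul_cont : ∀ y : Y, ∀ ε > 0, ∃ δ > 0, ∀ a : ℝ, |a| ≤ δ → norm (a • y) ≤ ε
  complete : ∀ u : ℕ → Y,
    (∀ ε > 0, ∃ N : ℕ, ∀ m ≥ N, ∀ n ≥ N, norm (u m - u n) ≤ ε) →
    ∃ y : Y, ∀ ε > 0, ∃ N : ℕ, ∀ n ≥ N, norm (u n - y) ≤ ε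

/-- A Köthe F-space on a measure space `(Ω, Σ, μ)`: a solid linear subspace of the
measurable functions containing the constant `1`, with a complete F-norm. -/
structure KotheFSpace (Ω : Type*) [MeasurableSpace Ω] (μ : Measure Ω) : Type _ where
  Mem : (Ω → ℝ) → Prop
  norm : (Ω → ℝ) → ℝ
  measurable_of_mem : ∀ f, Mem f → Measurable f
  add_mem : ∀ f g, Mem f → Mem g → Mem (f + g)
  smul_mem : ∀ (c : ℝ) f, Mem f → Mem (c • f)
  one_mem : Mem (fun _ => 1)
  solid_mem : ∀ f g, Measurable f → Mem g → (∀ ω, |f ω| ≤ |g ω|) → Mem f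
  solid_norm : ∀ f g, Mem f → Mem g → (∀ ω, |f ω| ≤ |g ω|) → norm f ≤ norm g
  nonneg : ∀ f, 0 ≤ norm f
  add_le : ∀ f g, Mem f → Mem g → norm (f + g) ≤ norm f + norm g
  smul_le : ∀ (c : ℝ) f, |c| ≤ 1 → Mem f → norm (c • f) ≤ norm f
  complete : ∀ u : ℕ → (Ω → ℝ), (∀ n, Mem (u n)) →
    (∀ ε > 0, ∃ N : ℕ, ∀ m ≥ N, ∀ n ≥ N, norm (u m - u n) ≤ ε) →
    ∃ f, Mem f ∧ ∀ ε > 0, ∃ N : ℕ, ∀ n ≥ N, norm (u n - f) ≤ ε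

/-- A sign: a measurable `{-1,0,1}`-valued function. -/
def IsSign {Ω : Type*} [MeasurableSpace Ω] (x : Ω → ℝ) : Prop :=
  Measurable x ∧ ∀ ω, x ω = -1 ∨ x ω = 0 ∨ x ω = 1

/-- A sign on a set `A`: its support is `A`. -/
def IsSignOn {Ω : Type*} [MeasurableSpace Ω] (x : Ω → ℝ) (A : Set Ω) : Prop :=
  IsSign x ∧ Function.support x = A

/-- A mean zero sign on `A`. -/
def IsMeanZeroSignOn {Ω : Type*} [MeasurableSpace Ω] (μ : Measure Ω)
    (x : Ω → ℝ) (A : Set Ω) : Prop :=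
  IsSignOn x A ∧ ∫ ω, x ω ∂μ = 0

/-- A continuous linear operator from a Köthe F-space `X` into an F-space `(Y, FY)`. -/
structure KOperator {Ω : Type*} [MeasurableSpace Ω] {μ : Measure Ω}
    (X : KotheFSpace Ω μ) (Y : Type*) [AddCommGroup Y] [Module ℝ Y]
    (FY : FSpaceNorm Y) : Type _ where
  toFun : (Ω → ℝ) → Y
  map_add : ∀ f g, X.Mem f → X.Mem g → toFun (f + g) = toFun f + toFun g
  map_smul : ∀ (c : ℝ) f, X.Mem f → toFun (c • f) = c • toFun f
  cont : ∀ ε > 0, ∃ δ > 0, ∀ f, X.Mem f → X.norm f ≤ δ → FY.norm (toFun f) ≤ ε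

/-- `T` is narrow: every set of positive measure carries a mean zero sign whose image
has arbitrarily small norm. -/
def KOperator.Narrow {Ω : Type*} [MeasurableSpace Ω] {μ : Measure Ω}
    {X : KotheFSpace Ω μ} {Y : Type*} [AddCommGroup Y] [Module ℝ Y]
    {FY : FSpaceNorm Y} (T : KOperator X Y FY) : Prop :=
  ∀ A : Set Ω, MeasurableSet A → 0 < μ A → ∀ ε > 0,
    ∃ x : Ω → ℝ, IsMeanZeroSignOn μ x A ∧ FY.norm (T.toFun x) < ε

/-- The image `T(Z)` of the set of all signs is relatively compact (equivalently, since
`Y` is complete, totally bounded). -/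
def KOperator.RelCompactSigns {Ω : Type*} [MeasurableSpace Ω] {μ : Measure Ω}
    {X : KotheFSpace Ω μ} {Y : Type*} [AddCommGroup Y] [Module ℝ Y]
    {FY : FSpaceNorm Y} (T : KOperator X Y FY) : Prop :=
  ∀ ε > 0, ∃ (n : ℕ) (c : Fin n → Y), ∀ x : Ω → ℝ, IsSign x →
    ∃ i : Fin n, FY.norm (T.toFun x - c i) ≤ ε


section Aux

open MeasureTheory Function

variable {Ω : Type*} [MeasurableSpace Ω] {μ : Measure Ω}
variable {X : KotheFSpace Ω μ} {Y : Type*} [AddCommGroup Y] [Module ℝ Y] {FY : FSpaceNorm Y}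

lemma aux_sign_abs_le {x : Ω → ℝ} (hx : IsSign x) (ω : Ω) : |x ω| ≤ 1 := by
  rcases hx.2 ω with h | h | h <;> rw [h] <;> norm_num

lemma aux_sign_mem {x : Ω → ℝ} (hx : IsSign x) : X.Mem x := by
  refine X.solid_mem x (fun _ => 1) hx.1 X.one_mem (fun ω => ?_)
  simpa using aux_sign_abs_le hx ω

lemma aux_mem_zero : X.Mem (0 : Ω → ℝ) := by
  have := X.smul_mem 0 _ X.one_mem
  simpa using this

lemma aux_norm_zero : FY.norm 0 = 0 := (FY.eq_zero_iff 0).2 rfl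

lemma aux_map_zero (T : KOperator X Y FY) : T.toFun 0 = 0 := by
  have h := T.map_smul 0 0 aux_mem_zero
  simpa using h

lemma aux_map_sub (T : KOperator X Y FY) {f g : Ω → ℝ} (hf : X.Mem f) (hg : X.Mem g) :
    T.toFun (f - g) = T.toFun f - T.toFun g := by
  have h1 : f - g = f + (-1 : ℝ) • g := by
    funext ω; simp [sub_eq_add_neg]
  rw [h1, T.map_add f ((-1 : ℝ) • g) hf (X.smul_mem _ _ hg), T.map_smul (-1) g hg]
  simp [sub_eq_add_neg]

lemma aux_norm_sub_le (a b c : Y) :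
    FY.norm (a - b) ≤ FY.norm (a - c) + FY.norm (b - c) := by
  have h1 : a - b = (a - c) + -(b - c) := by abel
  calc FY.norm (a - b) ≤ FY.norm (a - c) + FY.norm (-(b - c)) := by
        rw [h1]; exact FY.add_le _ _
    _ = FY.norm (a - c) + FY.norm (b - c) := by rw [FY.neg]

lemma aux_mem_sum {ι : Type*} (s : Finset ι) (g : ι → Ω → ℝ) (h : ∀ v ∈ s, X.Mem (g v)) :
    X.Mem (fun ω => ∑ v ∈ s, g v ω) := by
  classical
  induction s using Finset.induction_on with
  | empty => simp only [Finset.sum_empty]; exact aux_mem_zero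
  | @insert a s' hv ih =>
    have : (fun ω => ∑ v ∈ insert a s', g v ω) = g a + fun ω => ∑ v ∈ s', g v ω := by
      funext ω; simp [Finset.sum_insert hv]
    rw [this]
    exact X.add_mem _ _ (h a (Finset.mem_insert_self a s'))
      (ih fun v hv' => h v (Finset.mem_insert_of_mem hv'))

lemma aux_map_sum (T : KOperator X Y FY) {ι : Type*} (s : Finset ι) (g : ι → Ω → ℝ)
    (h : ∀ v ∈ s, X.Mem (g v)) :
    T.toFun (fun ω => ∑ v ∈ s, g v ω) = ∑ v ∈ s, T.toFun (g v) := by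
  classical
  induction s using Finset.induction_on with
  | empty => simp only [Finset.sum_empty]; exact aux_map_zero T
  | @insert a s' hv ih =>
    have h2 : (fun ω => ∑ v ∈ insert a s', g v ω) = g a + fun ω => ∑ v ∈ s', g v ω := by
      funext ω; simp [Finset.sum_insert hv]
    rw [h2, T.map_add _ _ (h a (Finset.mem_insert_self a s'))
      (aux_mem_sum s' g fun v hv' => h v (Finset.mem_insert_of_mem hv')),
      ih fun v hv' => h v (Finset.mem_insert_of_mem hv'), Finset.sum_insert hv]

lemma aux_norm_sum_le {ι : Type*} (s : Finset ι) (w : ι → Y) :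
    FY.norm (∑ v ∈ s, w v) ≤ ∑ v ∈ s, FY.norm (w v) := by
  classical
  induction s using Finset.induction_on with
  | empty => simp [aux_norm_zero]
  | @insert a s' hv ih =>
    rw [Finset.sum_insert hv, Finset.sum_insert hv]
    exact le_trans (FY.add_le _ _) (by linarith)

lemma aux_sign_integrable [IsFiniteMeasure μ] {x : Ω → ℝ} (hx : IsSign x) :
    Integrable x μ := by
  refine Integrable.mono' (integrable_const 1) hx.1.aestronglyMeasurable ?_
  exact Filter.Eventually.of_forall fun ω => by
    simpa [Real.norm_eq_abs] using aux_sign_abs_le hx ω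

end Aux

section Aux2

open MeasureTheory Function

variable {Ω : Type*} [MeasurableSpace Ω] {μ : Measure Ω}

lemma aux_sum_eq_single {ι : Type*} [DecidableEq ι] (s : Finset ι) (g : ι → Ω → ℝ)
    (P : ι → Set Ω)
    (hsupp : ∀ v ∈ s, Function.support (g v) = P v)
    (hdisj : ∀ v ∈ s, ∀ w ∈ s, v ≠ w → Disjoint (P v) (P w))
    {v : ι} (hv : v ∈ s) {ω : Ω} (hω : ω ∈ P v) :
    ∑ w ∈ s, g w ω = g v ω := by
  refine Finset.sum_eq_single_of_mem v hv fun w hw hne => ?_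
  have : ω ∉ P w := fun hmem =>
    (hdisj v hv w hw hne.symm).ne_of_mem hω hmem rfl
  rw [← hsupp w hw] at this
  simpa [Function.mem_support, not_not] using this

lemma aux_sign_sum {ι : Type*} [DecidableEq ι] (s : Finset ι) (g : ι → Ω → ℝ)
    (P : ι → Set Ω)
    (hsign : ∀ v ∈ s, IsSign (g v))
    (hsupp : ∀ v ∈ s, Function.support (g v) = P v)
    (hdisj : ∀ v ∈ s, ∀ w ∈ s, v ≠ w → Disjoint (P v) (P w)) :
    IsSign (fun ω => ∑ v ∈ s, g v ω) ∧
      Function.support (fun ω => ∑ v ∈ s, g v ω) = ⋃ v ∈ s, P v := by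
  classical
  have hmeas : Measurable (fun ω => ∑ v ∈ s, g v ω) :=
    Finset.measurable_sum s fun v hv => (hsign v hv).1
  have hzero : ∀ ω, ω ∉ (⋃ v ∈ s, P v) → ∑ v ∈ s, g v ω = 0 := by
    intro ω hω
    refine Finset.sum_eq_zero fun v hv => ?_
    have : ω ∉ P v := fun h => hω (Set.mem_biUnion hv h)
    rw [← hsupp v hv] at this
    simpa [Function.mem_support, not_not] using this
  constructor
  · refine ⟨hmeas, fun ω => ?_⟩
    show (∑ v ∈ s, g v ω) = -1 ∨ (∑ v ∈ s, g v ω) = 0 ∨ (∑ v ∈ s, g v ω) = 1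
    by_cases hω : ω ∈ ⋃ v ∈ s, P v
    · rcases Set.mem_iUnion₂.1 hω with ⟨v, hv, hPv⟩
      rw [aux_sum_eq_single s g P hsupp hdisj hv hPv]
      exact (hsign v hv).2 ω
    · rw [hzero ω hω]; right; left; rfl
  · ext ω
    simp only [Function.mem_support]
    show ¬(∑ v ∈ s, g v ω) = 0 ↔ _
    constructor
    · intro h
      by_contra hω
      exact h (hzero ω hω)
    · intro hω
      rcases Set.mem_iUnion₂.1 hω with ⟨v, hv, hPv⟩
      rw [aux_sum_eq_single s g P hsupp hdisj hv hPv]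
      rw [← hsupp v hv] at hPv
      exact hPv

lemma aux_sign_add {f g : Ω → ℝ} (hf : IsSign f) (hg : IsSign g)
    (hd : Disjoint (Function.support f) (Function.support g)) :
    IsSign (f + g) ∧
      Function.support (f + g) = Function.support f ∪ Function.support g := by
  have key : ∀ ω, f ω = 0 ∨ g ω = 0 := by
    intro ω
    by_cases h : f ω = 0
    · exact Or.inl h
    · right
      by_contra h2
      exact hd.ne_of_mem (Function.mem_support.2 h) (Function.mem_support.2 h2) rfl
  constructor
  · refine ⟨hf.1.add hg.1, fun ω => ?_⟩
    rcases key ω with h | h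
    · simpa [h] using hg.2 ω
    · simpa [h] using hf.2 ω
  · ext ω
    simp only [Function.mem_support, Set.mem_union, Pi.add_apply]
    rcases key ω with h | h
    · simp [h]
    · simp [h]

end Aux2

section Aux3

open MeasureTheory Function

variable {Ω : Type*} [MeasurableSpace Ω] {μ : Measure Ω}

lemma aux_half_le [IsFiniteMeasure μ] (hμ : Atomless μ) (B : Set Ω)
    (hB : MeasurableSet B) (hpos : 0 < μ B) :
    ∃ C, C ⊆ B ∧ MeasurableSet C ∧ 0 < μ C ∧ μ C ≤ μ B / 2 := by
  rcases hμ B hB hpos with ⟨B', hsub, hmeas, hpos', hlt⟩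
  rcases le_or_gt (μ B') (μ B / 2) with h | h
  · exact ⟨B', hsub, hmeas, hpos', h⟩
  · refine ⟨B \ B', Set.diff_subset, hB.diff hmeas, ?_, ?_⟩
    · rw [measure_diff hsub hmeas.nullMeasurableSet (measure_ne_top μ B')]
      exact tsub_pos_iff_lt.2 hlt
    · rw [measure_diff hsub hmeas.nullMeasurableSet (measure_ne_top μ B')]
      calc μ B - μ B' ≤ μ B - μ B / 2 := tsub_le_tsub_left h.le _
        _ = μ B / 2 := ENNReal.sub_half (measure_ne_top μ B)

lemma aux_div_div (a : ENNReal) (n : ℕ) : a / 2 ^ n / 2 = a / 2 ^ (n + 1) := by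
  rw [div_eq_mul_inv, div_eq_mul_inv, div_eq_mul_inv, mul_assoc,
    ← ENNReal.mul_inv (Or.inl (by positivity)) (Or.inl (by simp)), ← pow_succ]

lemma aux_pow_small [IsFiniteMeasure μ] (hμ : Atomless μ) (B : Set Ω)
    (hB : MeasurableSet B) (hpos : 0 < μ B) (k : ℕ) :
    ∃ C, C ⊆ B ∧ MeasurableSet C ∧ 0 < μ C ∧ μ C ≤ μ B / 2 ^ k := by
  induction k with
  | zero => exact ⟨B, subset_rfl, hB, hpos, by simp⟩
  | succ k ih =>
    rcases ih with ⟨C, hsub, hmeas, hpos', hle⟩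
    rcases aux_half_le hμ C hmeas hpos' with ⟨C', hsub', hmeas', hpos'', hle'⟩
    refine ⟨C', hsub'.trans hsub, hmeas', hpos'', ?_⟩
    calc μ C' ≤ μ C / 2 := hle'
      _ ≤ μ B / 2 ^ k / 2 := by exact ENNReal.div_le_div_right hle 2
      _ = μ B / 2 ^ (k + 1) := aux_div_div _ _

lemma aux_small [IsFiniteMeasure μ] (hμ : Atomless μ) (B : Set Ω)
    (hB : MeasurableSet B) (hpos : 0 < μ B) (t : ENNReal) (ht : 0 < t) :
    ∃ C, C ⊆ B ∧ MeasurableSet C ∧ 0 < μ C ∧ μ C ≤ t := by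
  rcases le_or_gt (μ B) t with h | h
  · exact ⟨B, subset_rfl, hB, hpos, h⟩
  · have htne : t ≠ ⊤ := fun h' => by
      rw [h'] at h; exact (h.trans_le le_top).ne rfl
    have hne : μ B / t ≠ ⊤ := (ENNReal.div_lt_top (measure_ne_top μ B) ht.ne').ne
    rcases ENNReal.exists_nat_gt hne with ⟨k, hk⟩
    have hk2 : μ B / t < 2 ^ k := hk.trans_le (by
      have := Nat.lt_two_pow_self (n := k)
      exact_mod_cast Nat.cast_le.2 this.le)
    have : μ B < 2 ^ k * t := by
      rw [← ENNReal.div_lt_iff (Or.inl ht.ne') (Or.inl htne)]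
      exact hk2
    rcases aux_pow_small hμ B hB hpos k with ⟨C, hsub, hmeas, hpos', hle⟩
    refine ⟨C, hsub, hmeas, hpos', hle.trans ?_⟩
    rw [ENNReal.div_le_iff_le_mul (Or.inl (by positivity)) (Or.inl (by simp))]
    rw [mul_comm]
    exact this.le

lemma aux_sierp [IsFiniteMeasure μ] (hμ : Atomless μ) (B : Set Ω)
    (hB : MeasurableSet B) (t : ENNReal) (ht : t ≤ μ B) :
    ∃ D, D ⊆ B ∧ MeasurableSet D ∧ μ D = t := by
  classical
  rcases eq_or_lt_of_le (zero_le : 0 ≤ t) with h0 | h0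
  · exact ⟨∅, Set.empty_subset B, MeasurableSet.empty, by simp [← h0]⟩
  have htne : t ≠ ⊤ := fun h' => by
    have := ht; rw [h'] at this
    exact (measure_ne_top μ B) (top_le_iff.1 this)
  set Fam : Set Ω → Set (Set Ω) :=
    fun D => {C | C ⊆ B \ D ∧ MeasurableSet C ∧ μ D + μ C ≤ t} with hFam
  set step : Set Ω → Set Ω := fun D =>
    if h : ∃ C, C ∈ Fam D ∧ sSup (μ '' Fam D) / 2 < μ C then D ∪ h.choose else D
    with hstep
  set seq : ℕ → Set Ω := fun k => step^[k] ∅ with hseq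
  have hsub_step : ∀ D, D ⊆ step D := by
    intro D
    rw [hstep]
    by_cases h : ∃ C, C ∈ Fam D ∧ sSup (μ '' Fam D) / 2 < μ C
    · simp only [dif_pos h]; exact Set.subset_union_left
    · simp only [dif_neg h]; exact subset_rfl
  have hInv : ∀ D, MeasurableSet D → D ⊆ B → μ D ≤ t →
      MeasurableSet (step D) ∧ step D ⊆ B ∧ μ (step D) ≤ t := by
    intro D hD hDB hDt
    rw [hstep]
    by_cases h : ∃ C, C ∈ Fam D ∧ sSup (μ '' Fam D) / 2 < μ C
    · simp only [dif_pos h]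
      obtain ⟨hCsub, hCmeas, hCle⟩ := h.choose_spec.1
      have hdisj : Disjoint D h.choose :=
        Set.disjoint_of_subset_right hCsub Set.disjoint_sdiff_right
      have hunion : μ (D ∪ h.choose) = μ D + μ h.choose := measure_union hdisj hCmeas
      refine ⟨hD.union hCmeas, Set.union_subset hDB (hCsub.trans Set.diff_subset), ?_⟩
      rw [hunion]; exact hCle
    · simp only [dif_neg h]
      exact ⟨hD, hDB, hDt⟩
  have hseqInv : ∀ k, MeasurableSet (seq k) ∧ seq k ⊆ B ∧ μ (seq k) ≤ t := by
    intro k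
    induction k with
    | zero => exact ⟨MeasurableSet.empty, Set.empty_subset B, by show μ (step^[0] ∅) ≤ t; simp⟩
    | succ k ih =>
      have : seq (k + 1) = step (seq k) := Function.iterate_succ_apply' step k ∅
      rw [this]
      exact hInv (seq k) ih.1 ih.2.1 ih.2.2
  have hgrow : ∀ D, MeasurableSet D → D ⊆ B → μ D ≤ t →
      ∀ C, C ∈ Fam D → μ D + μ C / 2 ≤ μ (step D) := by
    intro D hD hDB hDt C hC
    by_cases hC0 : μ C = 0
    · rw [hC0]
      simp only [ENNReal.zero_div, add_zero]
      exact measure_mono (hsub_step D)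
    have hCle : μ C ≤ sSup (μ '' Fam D) := le_sSup ⟨C, hC, rfl⟩
    have hs0 : sSup (μ '' Fam D) ≠ 0 := by
      intro h
      exact hC0 (le_antisymm (h ▸ hCle) zero_le)
    have hstop : sSup (μ '' Fam D) ≠ ⊤ := by
      have : sSup (μ '' Fam D) ≤ t := by
        refine sSup_le ?_
        rintro x ⟨C', hC', rfl⟩
        exact le_trans le_add_self hC'.2.2
      exact fun h => htne (top_le_iff.1 (h ▸ this))
    have hhalf : sSup (μ '' Fam D) / 2 < sSup (μ '' Fam D) :=
      ENNReal.half_lt_self hs0 hstop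
    rcases lt_sSup_iff.1 hhalf with ⟨x, ⟨C', hC', rfl⟩, hx⟩
    have hex : ∃ C, C ∈ Fam D ∧ sSup (μ '' Fam D) / 2 < μ C := ⟨C', hC', hx⟩
    rw [hstep]
    simp only [dif_pos hex]
    obtain ⟨⟨hCsub', hCmeas', _⟩, hxgt⟩ := hex.choose_spec
    have hdisj : Disjoint D hex.choose :=
      Set.disjoint_of_subset_right hCsub' Set.disjoint_sdiff_right
    rw [measure_union hdisj hCmeas']
    refine add_le_add_right ?_ (μ D)
    calc μ C / 2 ≤ sSup (μ '' Fam D) / 2 := ENNReal.div_le_div_right hCle 2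
      _ ≤ μ hex.choose := hxgt.le
  set Dinf : Set Ω := ⋃ k, seq k with hDinf
  have hmono : Monotone seq := by
    refine monotone_nat_of_le_succ fun k => ?_
    have : seq (k + 1) = step (seq k) := Function.iterate_succ_apply' step k ∅
    rw [this]
    exact hsub_step (seq k)
  have hDmeas : MeasurableSet Dinf := MeasurableSet.iUnion fun k => (hseqInv k).1
  have hDsub : Dinf ⊆ B := Set.iUnion_subset fun k => (hseqInv k).2.1
  have hDμ : μ Dinf = ⨆ k, μ (seq k) := Directed.measure_iUnion (hmono.directed_le)
  have hDle : μ Dinf ≤ t := by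
    rw [hDμ]; exact iSup_le fun k => (hseqInv k).2.2
  rcases eq_or_lt_of_le hDle with heq | hlt
  · exact ⟨Dinf, hDsub, hDmeas, heq⟩
  exfalso
  have hposdiff : 0 < μ (B \ Dinf) := by
    rw [measure_diff hDsub hDmeas.nullMeasurableSet (measure_ne_top μ Dinf)]
    exact tsub_pos_iff_lt.2 (hlt.trans_le ht)
  rcases aux_small hμ (B \ Dinf) (hB.diff hDmeas) hposdiff (t - μ Dinf)
    (tsub_pos_iff_lt.2 hlt) with ⟨C, hCsub, hCmeas, hCpos, hCle⟩
  have hFamC : ∀ k, C ∈ Fam (seq k) := by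
    intro k
    refine ⟨hCsub.trans ?_, hCmeas, ?_⟩
    · exact Set.diff_subset_diff_right (Set.subset_iUnion seq k)
    · calc μ (seq k) + μ C ≤ μ Dinf + (t - μ Dinf) :=
          add_le_add (le_trans (measure_mono (Set.subset_iUnion seq k)) le_rfl) hCle
        _ = t := add_tsub_cancel_of_le hlt.le
  have hgrowth : ∀ k : ℕ, (k : ENNReal) * (μ C / 2) ≤ μ (seq k) := by
    intro k
    induction k with
    | zero => simp
    | succ k ih =>
      have hstep' : seq (k + 1) = step (seq k) := Function.iterate_succ_apply' step k ∅
      have := hgrow (seq k) (hseqInv k).1 (hseqInv k).2.1 (hseqInv k).2.2 C (hFamC k)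
      rw [← hstep'] at this
      calc ((k + 1 : ℕ) : ENNReal) * (μ C / 2) = (k : ENNReal) * (μ C / 2) + μ C / 2 := by
            push_cast
            rw [add_mul, one_mul]
        _ ≤ μ (seq k) + μ C / 2 := add_le_add_left ih _
        _ ≤ μ (seq (k + 1)) := this
  have hCone : μ C / 2 ≠ 0 := by
    simp only [ne_eq, ENNReal.div_eq_zero_iff]
    push_neg
    exact ⟨hCpos.ne', by simp⟩
  have hCtop : μ C / 2 ≠ ⊤ := by
    refine (ENNReal.div_lt_top (measure_ne_top μ C) (by simp)).ne
  have hne : t / (μ C / 2) ≠ ⊤ := (ENNReal.div_lt_top htne hCone).ne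
  rcases ENNReal.exists_nat_gt hne with ⟨k, hk⟩
  have : t < k * (μ C / 2) := by
    rw [← ENNReal.div_lt_iff (Or.inl hCone) (Or.inl hCtop)]
    exact hk
  have hcontr := le_trans (hgrowth k) (hseqInv k).2.2
  exact absurd (this.trans_le hcontr) (lt_irrefl t)

end Aux3

section Aux4

open MeasureTheory Function

variable {Ω : Type*} [MeasurableSpace Ω] {μ : Measure Ω}

lemma aux_partition [IsFiniteMeasure μ] (hμ : Atomless μ) (k : ℕ) (B : Set Ω)
    (hB : MeasurableSet B) :
    ∃ P : (Fin k → Bool) → Set Ω, (∀ v, MeasurableSet (P v)) ∧ (∀ v, P v ⊆ B) ∧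
      (∀ v w, v ≠ w → Disjoint (P v) (P w)) ∧ (⋃ v, P v) = B ∧
      (∀ v, μ (P v) = μ B / 2 ^ k) := by
  classical
  induction k with
  | zero =>
    refine ⟨fun _ => B, fun _ => hB, fun _ => subset_rfl, ?_, ?_, ?_⟩
    · intro v w hvw
      exact absurd (funext fun i => i.elim0) hvw
    · have : Nonempty (Fin 0 → Bool) := ⟨fun i => i.elim0⟩
      exact Set.iUnion_const B
    · intro v; simp
  | succ k ih =>
    rcases ih with ⟨P, hmeas, hsub, hdisj, hunion, hμP⟩
    have hhalf : ∀ v : Fin k → Bool, ∃ D, D ⊆ P v ∧ MeasurableSet D ∧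
        μ D = μ B / 2 ^ (k + 1) := by
      intro v
      rcases aux_sierp hμ (P v) (hmeas v) (μ (P v) / 2) ENNReal.half_le_self with
        ⟨D, h1, h2, h3⟩
      exact ⟨D, h1, h2, by rw [h3, hμP v, aux_div_div]⟩
    choose D hDsub hDmeas hDμ using hhalf
    refine ⟨fun w => if w 0 then D (Fin.tail w) else P (Fin.tail w) \ D (Fin.tail w),
      ?_, ?_, ?_, ?_, ?_⟩
    · intro w
      dsimp only
      by_cases h : w 0 = true
      · rw [if_pos h]; exact hDmeas _
      · rw [if_neg h]; exact (hmeas _).diff (hDmeas _)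
    · intro w
      dsimp only
      by_cases h : w 0 = true
      · rw [if_pos h]; exact (hDsub _).trans (hsub _)
      · rw [if_neg h]; exact Set.diff_subset.trans (hsub _)
    · intro w w' hww
      by_cases ht : Fin.tail w = Fin.tail w'
      · have h0 : w 0 ≠ w' 0 := by
          intro h0
          apply hww
          have := Fin.cons_self_tail w
          rw [← Fin.cons_self_tail w, ← Fin.cons_self_tail w', h0, ht]
        dsimp only
        by_cases hw0 : w 0 = true
        · have hw0' : ¬ w' 0 = true := fun h' => h0 (hw0.trans h'.symm)
          rw [if_pos hw0, if_neg hw0', ← ht]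
          exact Set.disjoint_sdiff_right
        · have hw0' : w' 0 = true := by
            have h1 : w 0 = false := by simpa using hw0
            rcases Bool.eq_false_or_eq_true (w' 0) with h' | h'
            · exact h'
            · exact absurd (h1.trans h'.symm) h0
          rw [if_neg hw0, if_pos hw0', ← ht]
          exact Set.disjoint_sdiff_left
      · have := hdisj _ _ ht
        by_cases h : w 0 <;> by_cases h' : w' 0 <;> simp only [h, h', if_true, if_false] <;>
          exact Set.disjoint_of_subset (by first | exact hDsub _ | exact Set.diff_subset)
            (by first | exact hDsub _ | exact Set.diff_subset) this
    · ext ω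
      constructor
      · intro hω
        rcases Set.mem_iUnion.1 hω with ⟨w, hw⟩
        by_cases h : w 0 = true
        · rw [if_pos h] at hw; exact hsub _ (hDsub _ hw)
        · rw [if_neg h] at hw; exact hsub _ hw.1
      · intro hω
        rw [← hunion] at hω
        rcases Set.mem_iUnion.1 hω with ⟨v, hv⟩
        by_cases h : ω ∈ D v
        · refine Set.mem_iUnion.2 ⟨Fin.cons true v, ?_⟩
          simp [Fin.cons_zero, Fin.tail_cons, h]
        · refine Set.mem_iUnion.2 ⟨Fin.cons false v, ?_⟩
          simp [Fin.cons_zero, Fin.tail_cons, hv, h]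
    · intro w
      dsimp only
      by_cases h : w 0 = true
      · rw [if_pos h]; exact hDμ _
      · rw [if_neg h]
        rw [measure_diff (hDsub _) (hDmeas _).nullMeasurableSet (measure_ne_top μ _),
          hμP, hDμ, ← aux_div_div, ENNReal.sub_half
          (a := μ B / 2 ^ k) ((ENNReal.div_lt_top (measure_ne_top μ B) (by positivity)).ne)]
  
end Aux4

section Aux5

open Function

lemma aux_card_filter (n : ℕ) (c c' : Fin (n + 1)) (hcc : c ≠ c') :
    (Finset.univ.filter fun v : Fin (n + 1) → Bool => v c ≠ v c').card = 2 ^ n := by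
  classical
  set S := Finset.univ.filter fun v : Fin (n + 1) → Bool => v c ≠ v c' with hS
  set S' := Finset.univ.filter fun v : Fin (n + 1) → Bool => ¬ v c ≠ v c' with hS'
  have hcard : S.card + S'.card = 2 ^ (n + 1) := by
    rw [hS, hS', Finset.card_filter_add_card_filter_not]
    rw [Finset.card_univ, Fintype.card_fun]
    simp
  have hbij : S.card = S'.card := by
    refine Finset.card_bij' (fun v _ => Function.update v c (!v c))
      (fun v _ => Function.update v c (!v c)) ?_ ?_ ?_ ?_
    · intro v hv
      rw [hS] at hv
      rw [hS']
      simp only [Finset.mem_filter, Finset.mem_univ, true_and] at hv ⊢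
      rw [Function.update_self, Function.update_of_ne (Ne.symm hcc)]
      simp only [ne_eq, not_not]
      rcases Bool.eq_false_or_eq_true (v c) with h | h <;>
        rcases Bool.eq_false_or_eq_true (v c') with h' | h' <;> simp_all
    · intro v hv
      rw [hS'] at hv
      rw [hS]
      simp only [Finset.mem_filter, Finset.mem_univ, true_and] at hv ⊢
      rw [Function.update_self, Function.update_of_ne (Ne.symm hcc)]
      simp only [ne_eq, not_not] at hv
      rcases Bool.eq_false_or_eq_true (v c) with h | h <;> simp_all
    · intro v _
      funext i
      by_cases h : i = c
      · subst h; simp [Function.update_self]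
      · simp [Function.update_of_ne h]
    · intro v _
      funext i
      by_cases h : i = c
      · subst h; simp [Function.update_self]
      · simp [Function.update_of_ne h]
  have h2 : 2 ^ (n + 1) = 2 ^ n + 2 ^ n := by rw [pow_succ]; ring
  omega

lemma aux_mul_div (a : ENNReal) (n : ℕ) : (2 : ENNReal) ^ n * (a / 2 ^ (n + 1)) = a / 2 := by
  have h1 : ((2 : ENNReal) ^ (n + 1))⁻¹ = ((2 : ENNReal) ^ n)⁻¹ * 2⁻¹ := by
    rw [pow_succ, ENNReal.mul_inv (Or.inl (by positivity)) (Or.inl (by simp))]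
  rw [div_eq_mul_inv, h1, div_eq_mul_inv]
  calc (2 : ENNReal) ^ n * (a * (((2 : ENNReal) ^ n)⁻¹ * 2⁻¹))
      = ((2 : ENNReal) ^ n * ((2 : ENNReal) ^ n)⁻¹) * (a * 2⁻¹) := by ring
    _ = a * 2⁻¹ := by rw [ENNReal.mul_inv_cancel (by positivity) (by simp), one_mul]

end Aux5

section Aux6

open MeasureTheory Function

variable {Ω : Type*} [MeasurableSpace Ω] {μ : Measure Ω}
variable {X : KotheFSpace Ω μ} {Y : Type*} [AddCommGroup Y] [Module ℝ Y] {FY : FSpaceNorm Y}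

lemma aux_norm_sub_le' (a b : Y) : FY.norm (a - b) ≤ FY.norm a + FY.norm b := by
  rw [sub_eq_add_neg]
  exact le_trans (FY.add_le a (-b)) (by rw [FY.neg])

lemma aux_mem_sub {f g : Ω → ℝ} (hf : X.Mem f) (hg : X.Mem g) : X.Mem (f - g) := by
  have h1 : f - g = f + (-1 : ℝ) • g := by funext ω; simp [sub_eq_add_neg]
  rw [h1]
  exact X.add_mem _ _ hf (X.smul_mem _ _ hg)

lemma aux_sign_pm (c : ℝ) (hc : c = 1 ∨ c = -1) {x : Ω → ℝ} (hx : IsSign x) :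
    IsSign (fun ω => c * x ω) ∧
      Function.support (fun ω => c * x ω) = Function.support x := by
  have hc0 : c ≠ 0 := by rcases hc with h | h <;> rw [h] <;> norm_num
  constructor
  · refine ⟨hx.1.const_mul c, fun ω => ?_⟩
    rcases hx.2 ω with h | h | h <;> rcases hc with h' | h' <;>
      simp [h, h'] <;> norm_num
  · ext ω
    simp [Function.mem_support, hc0]

lemma aux_main [IsFiniteMeasure μ] (hμ : Atomless μ)
    (T₁ T₂ : KOperator X Y FY) (h₁ : T₁.Narrow)
    (δ ε₂ ε' : ℝ) (hδ : 0 < δ) (hε' : 0 < ε')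
    (hind : ∀ A : Set Ω, MeasurableSet A → μ A ≤ ENNReal.ofReal δ →
      FY.norm (T₂.toFun (A.indicator fun _ => (1 : ℝ))) ≤ ε₂)
    (n : ℕ) (cnet : Fin n → Y)
    (hnet : ∀ x : Ω → ℝ, IsSign x → ∃ i, FY.norm (T₂.toFun x - cnet i) ≤ ε') :
    ∀ r : ℕ, ∀ B : Set Ω, MeasurableSet B → 0 < μ B →
      μ B ≤ 2 ^ r * ENNReal.ofReal δ → ∀ β : ℝ, 0 < β →
      ∃ x : Ω → ℝ, IsMeanZeroSignOn μ x B ∧ X.Mem x ∧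
        FY.norm (T₁.toFun x) ≤ β ∧ FY.norm (T₂.toFun x) ≤ 2 * ε₂ + 2 * ε' * r := by
  intro r
  induction r with
  | zero =>
    intro B hB hpos hle β hβ
    classical
    obtain ⟨x, hx, hT1⟩ := h₁ B hB hpos β hβ
    refine ⟨x, hx, aux_sign_mem hx.1.1, hT1.le, ?_⟩
    -- decompose x into indicators
    set Pp : Set Ω := x ⁻¹' {1} with hPp
    set Nn : Set Ω := x ⁻¹' {-1} with hNn
    have hPpmeas : MeasurableSet Pp := hx.1.1.1 (measurableSet_singleton 1)
    have hNnmeas : MeasurableSet Nn := hx.1.1.1 (measurableSet_singleton (-1))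
    have hdecomp : x = (Pp.indicator fun _ => (1 : ℝ)) - Nn.indicator fun _ => (1 : ℝ) := by
      funext ω
      have hmemP : ω ∈ Pp ↔ x ω = 1 := by rw [hPp]; simp [Set.mem_preimage]
      have hmemN : ω ∈ Nn ↔ x ω = -1 := by rw [hNn]; simp [Set.mem_preimage]
      have hindP : Pp.indicator (fun _ => (1 : ℝ)) ω = if x ω = 1 then 1 else 0 := by
        rw [Set.indicator_apply]
        by_cases h : x ω = 1
        · rw [if_pos (hmemP.2 h), if_pos h]
        · rw [if_neg (fun hm => h (hmemP.1 hm)), if_neg h]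
      have hindN : Nn.indicator (fun _ => (1 : ℝ)) ω = if x ω = -1 then 1 else 0 := by
        rw [Set.indicator_apply]
        by_cases h : x ω = -1
        · rw [if_pos (hmemN.2 h), if_pos h]
        · rw [if_neg (fun hm => h (hmemN.1 hm)), if_neg h]
      show x ω = _ - _
      rw [hindP, hindN]
      rcases hx.1.1.2 ω with h | h | h <;> rw [h] <;> norm_num
    have hPsub : Pp ⊆ B := by
      intro ω hω
      rw [← hx.1.2]
      rw [hPp] at hω
      simp only [Set.mem_preimage, Set.mem_singleton_iff] at hω
      simp [Function.mem_support, hω]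
    have hNsub : Nn ⊆ B := by
      intro ω hω
      rw [← hx.1.2]
      rw [hNn] at hω
      simp only [Set.mem_preimage, Set.mem_singleton_iff] at hω
      simp [Function.mem_support, hω]
    have hBδ : μ B ≤ ENNReal.ofReal δ := by simpa using hle
    have hmemind : ∀ S : Set Ω, MeasurableSet S →
        X.Mem (S.indicator fun _ => (1 : ℝ)) := by
      intro S hS
      refine X.solid_mem _ (fun _ => 1) (measurable_const.indicator hS) X.one_mem ?_
      intro ω
      by_cases h : ω ∈ S <;> simp [Set.indicator_apply, h]
    have hT2x : T₂.toFun x = T₂.toFun (Pp.indicator fun _ => (1 : ℝ)) -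
        T₂.toFun (Nn.indicator fun _ => (1 : ℝ)) := by
      rw [hdecomp]
      exact aux_map_sub T₂ (hmemind Pp hPpmeas) (hmemind Nn hNnmeas)
    rw [hT2x]
    have h1 := hind Pp hPpmeas (le_trans (measure_mono hPsub) hBδ)
    have h2 := hind Nn hNnmeas (le_trans (measure_mono hNsub) hBδ)
    calc FY.norm (T₂.toFun (Pp.indicator fun _ => (1 : ℝ)) -
          T₂.toFun (Nn.indicator fun _ => (1 : ℝ)))
        ≤ ε₂ + ε₂ := le_trans (aux_norm_sub_le' _ _) (add_le_add h1 h2)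
      _ ≤ 2 * ε₂ + 2 * ε' * (0 : ℕ) := by simp; linarith
  | succ r ih =>
    intro B hB hpos hle β hβ
    classical
    -- partition B into 2^(n+1) equal blocks
    obtain ⟨P, hPmeas, hPsub, hPdisj, hPunion, hPμ⟩ := aux_partition hμ (n + 1) B hB
    have hpow_ne_top : ((2 : ENNReal) ^ (n + 1)) ≠ ⊤ := by simp
    have hPpos : ∀ v, 0 < μ (P v) := by
      intro v
      rw [hPμ v]
      exact ENNReal.div_pos hpos.ne' hpow_ne_top
    -- per-block mean zero signs with small T₁ norm
    set b : ℝ := β / (4 * 2 ^ (n + 1)) with hbdef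
    have hbpos : 0 < b := by rw [hbdef]; positivity
    have hxex : ∀ v : Fin (n + 1) → Bool, ∃ x : Ω → ℝ,
        IsMeanZeroSignOn μ x (P v) ∧ FY.norm (T₁.toFun x) < b :=
      fun v => h₁ (P v) (hPmeas v) (hPpos v) b hbpos
    choose xv hxv hT1v using hxex
    -- the Rademacher-type signs
    set g : Fin (n + 1) → (Fin (n + 1) → Bool) → Ω → ℝ :=
      fun c v ω => (if v c then (1 : ℝ) else -1) * xv v ω with hgdef
    have hgsign : ∀ c v, IsSign (g c v) :=
      fun c v => (aux_sign_pm _ (by by_cases h : v c <;> simp [h]) (hxv v).1.1).1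
    have hgsupp : ∀ c v, Function.support (g c v) = P v := by
      intro c v
      rw [hgdef]
      rw [(aux_sign_pm (if v c then (1 : ℝ) else -1)
        (by by_cases h : v c <;> simp [h]) (hxv v).1.1).2]
      exact (hxv v).1.2
    have hdisj' : ∀ v ∈ (Finset.univ : Finset (Fin (n + 1) → Bool)), ∀ w ∈ Finset.univ,
        v ≠ w → Disjoint (P v) (P w) := fun v _ w _ hvw => hPdisj v w hvw
    set y : Fin (n + 1) → Ω → ℝ := fun c ω => ∑ v, g c v ω with hydef
    have hysign : ∀ c, IsSign (y c) := by
      intro c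
      exact (aux_sign_sum Finset.univ (g c) P (fun v _ => hgsign c v)
        (fun v _ => hgsupp c v) hdisj').1
    -- pigeonhole on the net
    have hFex : ∀ c, ∃ i, FY.norm (T₂.toFun (y c) - cnet i) ≤ ε' :=
      fun c => hnet (y c) (hysign c)
    choose F hF using hFex
    obtain ⟨c, c', hcc, hFc⟩ := Fintype.exists_ne_map_eq_of_card_lt F (by simp)
    -- the difference sign z supported on half of B
    set S : Finset (Fin (n + 1) → Bool) :=
      Finset.univ.filter fun v => v c ≠ v c' with hSdef
    set z : Ω → ℝ := fun ω => ∑ v ∈ S, g c v ω with hzdef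
    set D : Set Ω := ⋃ v ∈ S, P v with hDdef
    have hzss := aux_sign_sum S (g c) P (fun v _ => hgsign c v)
      (fun v _ => hgsupp c v) (fun v _ w _ hvw => hPdisj v w hvw)
    have hzsign : IsSign z := hzss.1
    have hzsupp : Function.support z = D := hzss.2
    have hDmeas : MeasurableSet D := S.measurableSet_biUnion fun v _ => hPmeas v
    have hDsub : D ⊆ B := Set.iUnion₂_subset fun v _ => hPsub v
    -- μ D = μ B / 2
    have hμD : μ D = μ B / 2 := by
      rw [hDdef, measure_biUnion_finset (fun v _ w _ hvw => hPdisj v w hvw)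
        (fun v _ => hPmeas v)]
      have h1 : ∀ v ∈ S, μ (P v) = μ B / 2 ^ (n + 1) := fun v _ => hPμ v
      have h2 : ∑ p ∈ S, μ (P p) = ∑ _p ∈ S, μ B / 2 ^ (n + 1) := Finset.sum_congr rfl h1
      have h3 : S.card = 2 ^ n := aux_card_filter n c c' hcc
      rw [h2, Finset.sum_const, h3, nsmul_eq_mul]
      push_cast
      exact aux_mul_div (μ B) n
    -- z is mean zero
    have hgint : ∀ v : Fin (n + 1) → Bool, Integrable (g c v) μ :=
      fun v => aux_sign_integrable (hgsign c v)
    have hzint : ∫ ω, z ω ∂μ = 0 := by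
      rw [hzdef]
      rw [integral_finset_sum S fun v _ => hgint v]
      refine Finset.sum_eq_zero fun v _ => ?_
      rw [hgdef]
      simp only
      rw [integral_const_mul]
      rw [(hxv v).2, mul_zero]
    -- T₂ bound on z
    have hymem : ∀ c'', X.Mem (y c'') := fun c'' => aux_sign_mem (hysign c'')
    have hz2 : z = (1 / 2 : ℝ) • (y c - y c') := by
      have key : ∀ ω, (2 : ℝ) * z ω = y c ω - y c' ω := by
        intro ω
        have hgv : ∀ v : Fin (n + 1) → Bool,
            g c v ω = (if v c then (1 : ℝ) else -1) * xv v ω := fun v => rfl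
        have hgv' : ∀ v : Fin (n + 1) → Bool,
            g c' v ω = (if v c' then (1 : ℝ) else -1) * xv v ω := fun v => rfl
        have hvanish : ∀ v ∈ (Finset.univ : Finset (Fin (n + 1) → Bool)), v ∉ S →
            g c v ω - g c' v ω = 0 := by
          intro v _ hv
          have hveq : v c = v c' := by
            by_contra hne
            exact hv (Finset.mem_filter.2 ⟨Finset.mem_univ v, hne⟩)
          rw [hgv, hgv', hveq, sub_self]
        have hdouble : ∀ v ∈ S, g c v ω - g c' v ω = 2 * g c v ω := by
          intro v hv
          have hne : v c ≠ v c' := (Finset.mem_filter.1 hv).2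
          rw [hgv, hgv']
          rcases Bool.eq_false_or_eq_true (v c) with h | h <;>
            rcases Bool.eq_false_or_eq_true (v c') with h' | h' <;>
            rw [h, h'] at hne ⊢ <;> simp at hne ⊢ <;> ring
        have hyy : y c ω - y c' ω = ∑ v, (g c v ω - g c' v ω) := by
          rw [Finset.sum_sub_distrib]
        have hzz : (2 : ℝ) * z ω = ∑ v ∈ S, (2 : ℝ) * g c v ω := by
          rw [Finset.mul_sum]
        rw [hzz, hyy, ← Finset.sum_subset (Finset.filter_subset _ Finset.univ) hvanish]
        exact (Finset.sum_congr rfl hdouble).symm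
      funext ω
      simp only [Pi.smul_apply, Pi.sub_apply, smul_eq_mul]
      rw [← key ω]
      ring
    have hT2z : T₂.toFun z = (1 / 2 : ℝ) • (T₂.toFun (y c) - T₂.toFun (y c')) := by
      rw [hz2, T₂.map_smul _ _ (aux_mem_sub (hymem c) (hymem c')),
        aux_map_sub T₂ (hymem c) (hymem c')]
    have hT2zle : FY.norm (T₂.toFun z) ≤ 2 * ε' := by
      rw [hT2z]
      calc FY.norm ((1 / 2 : ℝ) • (T₂.toFun (y c) - T₂.toFun (y c')))
          ≤ FY.norm (T₂.toFun (y c) - T₂.toFun (y c')) :=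
            FY.smul_le _ _ (by rw [abs_of_nonneg (by norm_num : (0:ℝ) ≤ 1/2)]; norm_num)
        _ ≤ FY.norm (T₂.toFun (y c) - cnet (F c)) +
            FY.norm (T₂.toFun (y c') - cnet (F c)) := aux_norm_sub_le _ _ _
        _ ≤ ε' + ε' := by
            refine add_le_add (hF c) ?_
            rw [hFc]
            exact hF c'
        _ = 2 * ε' := by ring
    -- T₁ bound on z
    have hgmem : ∀ v, X.Mem (g c v) := fun v => aux_sign_mem (hgsign c v)
    have hT1z : FY.norm (T₁.toFun z) ≤ β / 4 := by
      rw [hzdef, aux_map_sum T₁ S (g c) fun v _ => hgmem v]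
      calc FY.norm (∑ v ∈ S, T₁.toFun (g c v)) ≤ ∑ v ∈ S, FY.norm (T₁.toFun (g c v)) :=
            aux_norm_sum_le S _
        _ ≤ ∑ v ∈ S, b := by
            refine Finset.sum_le_sum fun v _ => ?_
            have hgv : g c v = (if v c then (1 : ℝ) else -1) • xv v := by
              funext ω; rw [hgdef]; simp
            rw [hgv, T₁.map_smul _ _ (aux_sign_mem (hxv v).1.1)]
            rcases Bool.eq_false_or_eq_true (v c) with h | h
            · rw [h]
              simp only [if_true]
              rw [one_smul]
              exact (hT1v v).le
            · rw [h]
              simp only [Bool.false_eq_true, if_false]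
              rw [neg_one_smul, FY.neg]
              exact (hT1v v).le
        _ = S.card * b := by rw [Finset.sum_const, nsmul_eq_mul]
        _ ≤ 2 ^ (n + 1) * b := by
            have hcard : S.card ≤ 2 ^ (n + 1) := by
              calc S.card ≤ (Finset.univ : Finset (Fin (n + 1) → Bool)).card :=
                    Finset.card_filter_le _ _
                _ = 2 ^ (n + 1) := by rw [Finset.card_univ, Fintype.card_fun]; simp
            have : (S.card : ℝ) ≤ 2 ^ (n + 1) := by exact_mod_cast hcard
            exact mul_le_mul_of_nonneg_right this hbpos.le
        _ = β / 4 := by rw [hbdef]; field_simp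
    -- apply induction hypothesis on B \ D
    have hBDpos : 0 < μ (B \ D) ∧ μ (B \ D) = μ B / 2 := by
      have heq : μ (B \ D) = μ B / 2 := by
        rw [measure_diff hDsub hDmeas.nullMeasurableSet (measure_ne_top μ D), hμD,
          ENNReal.sub_half (measure_ne_top μ B)]
      exact ⟨heq ▸ ENNReal.div_pos hpos.ne' (by simp), heq⟩
    have hBDle : μ (B \ D) ≤ 2 ^ r * ENNReal.ofReal δ := by
      rw [hBDpos.2]
      calc μ B / 2 ≤ 2 ^ (r + 1) * ENNReal.ofReal δ / 2 := ENNReal.div_le_div_right hle 2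
        _ = 2 ^ r * ENNReal.ofReal δ := by
            have h1 : (2 : ENNReal) ^ (r + 1) * ENNReal.ofReal δ =
                2 ^ r * ENNReal.ofReal δ * 2 := by rw [pow_succ]; ring
            rw [h1, div_eq_mul_inv, mul_assoc, ENNReal.mul_inv_cancel (by norm_num)
              (by norm_num), mul_one]
    obtain ⟨x', hx', hx'mem, hx'T1, hx'T2⟩ := ih (B \ D) (hB.diff hDmeas) hBDpos.1 hBDle
      (β / 2) (by positivity)
    -- assemble
    have hdisjzx : Disjoint (Function.support z) (Function.support x') := by
      rw [hzsupp, hx'.1.2]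
      exact Set.disjoint_sdiff_right
    have hadd := aux_sign_add hzsign hx'.1.1 hdisjzx
    have hsupp : Function.support (z + x') = B := by
      rw [hadd.2, hzsupp, hx'.1.2]
      exact Set.union_diff_cancel hDsub
    have hint : ∫ ω, (z + x') ω ∂μ = 0 := by
      simp only [Pi.add_apply]
      rw [integral_add (aux_sign_integrable hzsign) (aux_sign_integrable hx'.1.1),
        hzint, hx'.2, add_zero]
    have hmemzx : X.Mem (z + x') := aux_sign_mem hadd.1
    refine ⟨z + x', ⟨⟨hadd.1, hsupp⟩, hint⟩, hmemzx, ?_, ?_⟩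
    · rw [T₁.map_add z x' (aux_sign_mem hzsign) hx'mem]
      calc FY.norm (T₁.toFun z + T₁.toFun x') ≤ FY.norm (T₁.toFun z) +
            FY.norm (T₁.toFun x') := FY.add_le _ _
        _ ≤ β / 4 + β / 2 := add_le_add hT1z hx'T1
        _ ≤ β := by linarith
    · rw [T₂.map_add z x' (aux_sign_mem hzsign) hx'mem]
      calc FY.norm (T₂.toFun z + T₂.toFun x') ≤ FY.norm (T₂.toFun z) +
            FY.norm (T₂.toFun x') := FY.add_le _ _
        _ ≤ 2 * ε' + (2 * ε₂ + 2 * ε' * r) := add_le_add hT2zle hx'T2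
        _ = 2 * ε₂ + 2 * ε' * ((r : ℕ) + 1 : ℕ) := by push_cast; ring
end Aux6
/-- Corollary 4.2: if `T₁` is narrow, `T₂(Z)` is relatively compact and
`lim_{μ(A)→0} ‖T₂ 1_A‖ = 0`, then `T₁ + T₂` is narrow. -/
theorem stmt_3 {Ω : Type*} [MeasurableSpace Ω] (μ : Measure Ω)
    [IsFiniteMeasure μ] (hμ : Atomless μ)
    (X : KotheFSpace Ω μ) (Y : Type*) [AddCommGroup Y] [Module ℝ Y]
    (FY : FSpaceNorm Y) (T₁ T₂ : KOperator X Y FY)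
    (h₁ : T₁.Narrow) (h₂ : T₂.RelCompactSigns)
    (h₂ind : ∀ ε > (0 : ℝ), ∃ δ > (0 : ℝ), ∀ A : Set Ω, MeasurableSet A →
      μ A ≤ ENNReal.ofReal δ →
      FY.norm (T₂.toFun (A.indicator fun _ => (1 : ℝ))) ≤ ε) :
    ∀ A : Set Ω, MeasurableSet A → 0 < μ A → ∀ ε > (0 : ℝ),
      ∃ x : Ω → ℝ, IsMeanZeroSignOn μ x A ∧
        FY.norm (T₁.toFun x + T₂.toFun x) < ε := by
  intro A hA hpos ε hε
  obtain ⟨δ, hδ, hind⟩ := h₂ind (ε / 8) (by positivity)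
  -- find r with μ A ≤ 2 ^ r * ofReal δ
  have hofδ : (0 : ENNReal) < ENNReal.ofReal δ := ENNReal.ofReal_pos.2 hδ
  obtain ⟨r, hr⟩ := ENNReal.exists_nat_gt
    ((ENNReal.div_lt_top (measure_ne_top μ A) hofδ.ne').ne)
  have hrle : μ A ≤ 2 ^ r * ENNReal.ofReal δ := by
    have h1 : μ A < r * ENNReal.ofReal δ := by
      rw [← ENNReal.div_lt_iff (Or.inl hofδ.ne') (Or.inl ENNReal.ofReal_ne_top)]
      exact hr
    have h2 : (r : ENNReal) ≤ 2 ^ r := by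
      have := (Nat.lt_two_pow_self (n := r)).le
      exact_mod_cast Nat.cast_le.2 this
    exact le_trans h1.le (mul_le_mul_of_nonneg_right h2 zero_le)
  set ε' : ℝ := ε / (8 * (r + 1)) with hε'def
  have hε' : 0 < ε' := by rw [hε'def]; positivity
  obtain ⟨n, cnet, hnet⟩ := h₂ ε' hε'
  obtain ⟨x, hsign, hmem, hT1, hT2⟩ := aux_main hμ T₁ T₂ h₁ δ (ε / 8) ε' hδ hε'
    hind n cnet hnet r A hA hpos hrle (ε / 4) (by positivity)
  refine ⟨x, hsign, ?_⟩
  have hR : (0 : ℝ) < (r : ℝ) + 1 := by positivity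
  have hkey : 2 * ε' * (r : ℝ) = ε / 4 * ((r : ℝ) / ((r : ℝ) + 1)) := by
    rw [hε'def]; field_simp; ring
  have hfrac : (r : ℝ) / ((r : ℝ) + 1) < 1 := (div_lt_one hR).2 (lt_add_one _)
  have hbound : 2 * ε' * (r : ℝ) < ε / 4 := by
    rw [hkey]
    calc ε / 4 * ((r : ℝ) / ((r : ℝ) + 1)) < ε / 4 * 1 := by
          apply mul_lt_mul_of_pos_left hfrac (by positivity)
    _ = ε / 4 := mul_one _
  calc FY.norm (T₁.toFun x + T₂.toFun x) ≤ FY.norm (T₁.toFun x) + FY.norm (T₂.toFun x) :=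
        FY.add_le _ _
    _ ≤ ε / 4 + (2 * (ε / 8) + 2 * ε' * r) := by
        refine add_le_add hT1 hT2
    _ < ε := by
        have := hbound
        linarith
end

section
/- Let (Ω, Σ, μ) be a finite atomless measure space, X a Köthe F-space on (Ω, Σ, μ), Y an F-space, and T : X → Y a continuous linear operator such that for every ε > 0 there exists δ > 0 with ‖T 1_A‖ ≤ ε whenever μ(A) ≤ δ. Then for every ε > 0 there is a finite measurable partition Ω = A_1 ⊔ ⋯ ⊔ A_n such that ‖T x‖ ≤ ε for every k ≤ n and every sign x supported in A_k. -/
open MeasureTheory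
open scoped ENNReal

lemma half_lemma {Ω : Type*} [MeasurableSpace Ω] {μ : Measure Ω} [IsFiniteMeasure μ]
    (hμ : Atomless μ) {S : Set Ω} (hS : MeasurableSet S) (h0 : 0 < μ S) :
    ∃ B, B ⊆ S ∧ MeasurableSet B ∧ 0 < μ B ∧ μ B ≤ μ S / 2 := by
  obtain ⟨B, hBS, hBm, hB0, hBlt⟩ := hμ S hS h0
  rcases le_or_gt (μ B) (μ S / 2) with h | h
  · exact ⟨B, hBS, hBm, hB0, h⟩
  · refine ⟨S \ B, Set.diff_subset, hS.diff hBm, ?_, ?_⟩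
    · rw [measure_diff hBS hBm.nullMeasurableSet (measure_ne_top μ B)]
      exact tsub_pos_of_lt hBlt
    · rw [measure_diff hBS hBm.nullMeasurableSet (measure_ne_top μ B)]
      rw [tsub_le_iff_right]
      calc μ S = μ S / 2 + μ S / 2 := (ENNReal.add_halves _).symm
        _ ≤ μ S / 2 + μ B := by gcongr

lemma small_lemma {Ω : Type*} [MeasurableSpace Ω] {μ : Measure Ω} [IsFiniteMeasure μ]
    (hμ : Atomless μ) {S : Set Ω} (hS : MeasurableSet S) (h0 : 0 < μ S)
    {η : ℝ≥0∞} (hη : 0 < η) :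
    ∃ B, B ⊆ S ∧ MeasurableSet B ∧ 0 < μ B ∧ μ B ≤ η := by
  have key : ∀ n : ℕ, ∃ B, B ⊆ S ∧ MeasurableSet B ∧ 0 < μ B ∧ μ B ≤ μ S / 2 ^ n := by
    intro n
    induction n with
    | zero => exact ⟨S, subset_rfl, hS, h0, by simp⟩
    | succ n ih =>
      obtain ⟨B, hBS, hBm, hB0, hBle⟩ := ih
      obtain ⟨C, hCB, hCm, hC0, hCle⟩ := half_lemma hμ hBm hB0
      refine ⟨C, hCB.trans hBS, hCm, hC0, ?_⟩
      calc μ C ≤ μ B / 2 := hCle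
        _ ≤ (μ S / 2 ^ n) / 2 := by gcongr
        _ = μ S / 2 ^ (n + 1) := by
            rw [pow_succ, div_eq_mul_inv, div_eq_mul_inv, div_eq_mul_inv,
              ENNReal.mul_inv (Or.inl (by positivity)) (Or.inl (by simp)), mul_assoc]
  -- choose n with μ S / 2 ^ n ≤ η
  obtain ⟨n, hn⟩ : ∃ n : ℕ, μ S / 2 ^ n ≤ η := by
    rcases eq_or_ne η ∞ with rfl | hηt
    · exact ⟨0, le_top⟩
    · obtain ⟨n, hn⟩ := ENNReal.exists_inv_two_pow_lt (a := η / μ S) (by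
        simp only [ne_eq, ENNReal.div_eq_zero_iff]
        push_neg
        exact ⟨hη.ne', measure_ne_top μ S⟩)
      refine ⟨n, ?_⟩
      rw [div_eq_mul_inv, ENNReal.inv_pow, mul_comm]
      calc (2 : ℝ≥0∞)⁻¹ ^ n * μ S ≤ η / μ S * μ S := by gcongr
        _ = η := ENNReal.div_mul_cancel h0.ne' (measure_ne_top μ S)
  obtain ⟨B, h1, h2, h3, h4⟩ := key n
  exact ⟨B, h1, h2, h3, h4.trans hn⟩

lemma peel_lemma {Ω : Type*} [MeasurableSpace Ω] {μ : Measure Ω} [IsFiniteMeasure μ]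
    (hμ : Atomless μ) {S : Set Ω} (hS : MeasurableSet S) {c : ℝ≥0∞}
    (hc0 : 0 < c) (hct : c ≠ ∞) (hcS : c < μ S) :
    ∃ B, B ⊆ S ∧ MeasurableSet B ∧ c / 2 ≤ μ B ∧ μ B ≤ c := by
  classical
  -- near-maximal small subsets of S \ E
  have hex : ∀ E : Set Ω, ∃ B, B ⊆ S \ E ∧ MeasurableSet B ∧ μ B ≤ c / 2 ∧
      ∀ B', B' ⊆ S \ E → MeasurableSet B' → μ B' ≤ c / 2 → μ B' ≤ 2 * μ B := by
    intro E
    set M : Set ℝ≥0∞ := {m | ∃ B', (B' ⊆ S \ E ∧ MeasurableSet B' ∧ μ B' ≤ c / 2) ∧ μ B' = m}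
      with hM
    have hMle : sSup M ≤ c / 2 := by
      apply sSup_le
      rintro m ⟨B', ⟨-, -, hle⟩, rfl⟩
      exact hle
    rcases eq_or_ne (sSup M) 0 with h0 | hne
    · refine ⟨∅, Set.empty_subset _, MeasurableSet.empty, by simp, ?_⟩
      intro B' h1 h2 h3
      have : μ B' ≤ sSup M := le_sSup ⟨B', ⟨h1, h2, h3⟩, rfl⟩
      simp only [h0, nonpos_iff_eq_zero] at this
      simp [this]
    · have hMt : sSup M ≠ ∞ := by
        intro h; rw [h] at hMle
        exact hct (top_le_iff.mp (le_trans (by simp) (hMle.trans (ENNReal.half_le_self))))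
      have hhalf : sSup M / 2 < sSup M := ENNReal.half_lt_self hne hMt
      obtain ⟨m, hm, hlt⟩ := lt_sSup_iff.mp hhalf
      obtain ⟨B, ⟨hB1, hB2, hB3⟩, rfl⟩ := hm
      refine ⟨B, hB1, hB2, hB3, ?_⟩
      intro B' h1 h2 h3
      have h4 : μ B' ≤ sSup M := le_sSup ⟨B', ⟨h1, h2, h3⟩, rfl⟩
      calc μ B' ≤ sSup M := h4
        _ = 2 * (sSup M / 2) := by
            rw [ENNReal.mul_div_cancel' (by norm_num) (by norm_num)]
        _ ≤ 2 * μ B := by gcongr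
  let g : Set Ω → Set Ω := fun E => if μ E < c / 2 then (hex E).choose else ∅
  have hg : ∀ E, g E ⊆ S \ E ∧ MeasurableSet (g E) ∧ μ (g E) ≤ c / 2 := by
    intro E
    by_cases h : μ E < c / 2
    · simp only [g, if_pos h]
      obtain ⟨h1, h2, h3, -⟩ := (hex E).choose_spec
      exact ⟨h1, h2, h3⟩
    · simp [g, if_neg h]
  let C : ℕ → Set Ω := fun n => Nat.rec ∅ (fun _ E => E ∪ g E) n
  have hC0 : C 0 = ∅ := rfl
  have hCsucc : ∀ n, C (n + 1) = C n ∪ g (C n) := fun n => rfl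
  have hCm : ∀ n, MeasurableSet (C n) := by
    intro n; induction n with
    | zero => exact MeasurableSet.empty
    | succ n ih => rw [hCsucc]; exact ih.union (hg (C n)).2.1
  have hCS : ∀ n, C n ⊆ S := by
    intro n; induction n with
    | zero => simp [hC0]
    | succ n ih =>
      rw [hCsucc]
      exact Set.union_subset ih ((hg (C n)).1.trans Set.diff_subset)
  have hCc : ∀ n, μ (C n) ≤ c := by
    intro n; induction n with
    | zero => simp [hC0]
    | succ n ih =>
      rw [hCsucc]
      rcases lt_or_ge (μ (C n)) (c / 2) with h | h
      · calc μ (C n ∪ g (C n)) ≤ μ (C n) + μ (g (C n)) := measure_union_le _ _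
          _ ≤ c / 2 + c / 2 := add_le_add h.le (hg (C n)).2.2
          _ = c := ENNReal.add_halves c
      · have : g (C n) = ∅ := if_neg (not_lt.mpr h)
        rw [this, Set.union_empty]; exact ih
  by_cases hstop : ∃ n, c / 2 ≤ μ (C n)
  · obtain ⟨n, hn⟩ := hstop
    exact ⟨C n, hCS n, hCm n, hn, hCc n⟩
  push_neg at hstop
  exfalso
  have hmono : Monotone C := by
    apply monotone_nat_of_le_succ
    intro n; rw [hCsucc]; exact Set.subset_union_left
  set U : Set Ω := ⋃ n, C n with hU
  have hUm : MeasurableSet U := MeasurableSet.iUnion hCm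
  have hUS : U ⊆ S := Set.iUnion_subset hCS
  have hUle : μ U ≤ c / 2 := by
    rw [hU, hmono.directed_le.measure_iUnion]
    exact iSup_le fun n => (hstop n).le
  have hdiff : 0 < μ (S \ U) := by
    rw [measure_diff hUS hUm.nullMeasurableSet (measure_ne_top μ U)]
    apply tsub_pos_of_lt
    exact lt_of_le_of_lt hUle ((ENNReal.half_lt_self hc0.ne' hct).trans hcS)
  have hc2 : (0 : ℝ≥0∞) < c / 2 := ENNReal.div_pos hc0.ne' (by norm_num)
  obtain ⟨B, hBSU, hBm, hB0, hBle⟩ := small_lemma hμ (hS.diff hUm) hdiff hc2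
  set b : ℝ≥0∞ := μ B / 2 with hb
  have hb0 : 0 < b := ENNReal.div_pos hB0.ne' (by norm_num)
  have hbt : b ≠ ∞ := (ENNReal.div_lt_top (measure_ne_top μ B) (by norm_num)).ne
  have hstep : ∀ n, μ (C n) + b ≤ μ (C (n + 1)) := by
    intro n
    have hlt : μ (C n) < c / 2 := hstop n
    have hgdef : g (C n) = (hex (C n)).choose := if_pos hlt
    obtain ⟨h1, h2, h3, h4⟩ := (hex (C n)).choose_spec
    have hBsub : B ⊆ S \ C n :=
      hBSU.trans (Set.diff_subset_diff_right (Set.subset_iUnion C n))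
    have hmax : μ B ≤ 2 * μ (g (C n)) := by rw [hgdef]; exact h4 B hBsub hBm hBle
    have hbg : b ≤ μ (g (C n)) := by
      rw [hb]
      calc μ B / 2 ≤ 2 * μ (g (C n)) / 2 := by gcongr
        _ = μ (g (C n)) := by
            rw [mul_comm, mul_div_assoc, ENNReal.div_self (by norm_num) (by norm_num), mul_one]
    have hdisj : Disjoint (C n) (g (C n)) :=
      Set.disjoint_sdiff_right.mono_right (hg (C n)).1
    rw [hCsucc, measure_union hdisj (hg (C n)).2.1]
    exact add_le_add_right hbg _
  have hlin : ∀ n : ℕ, (n : ℝ≥0∞) * b ≤ μ (C n) := by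
    intro n; induction n with
    | zero => simp
    | succ n ih =>
      push_cast
      rw [add_mul, one_mul]
      exact (add_le_add_left ih b).trans (hstep n)
  have hc2t : c / 2 ≠ ∞ := (ENNReal.div_lt_top hct (by norm_num)).ne
  obtain ⟨n, hn⟩ := ENNReal.exists_nat_gt ((ENNReal.div_lt_top hc2t hb0.ne').ne : (c / 2) / b ≠ ∞)
  have hfin : c / 2 < (n : ℝ≥0∞) * b := by
    rwa [ENNReal.div_lt_iff (Or.inl hb0.ne') (Or.inl hbt)] at hn
  exact lt_irrefl _ (lt_of_le_of_lt ((hlin n).trans (hstop n).le) hfin)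

lemma partition_lemma {Ω : Type*} [MeasurableSpace Ω] {μ : Measure Ω} [IsFiniteMeasure μ]
    (hμ : Atomless μ) {c : ℝ≥0∞} (hc0 : 0 < c) (hct : c ≠ ∞) :
    ∀ n : ℕ, ∀ S : Set Ω, MeasurableSet S → μ S ≤ c + n * (c / 2) →
    ∃ A : Fin (n + 1) → Set Ω, (∀ k, MeasurableSet (A k)) ∧
      (Pairwise fun k l => Disjoint (A k) (A l)) ∧ (⋃ k, A k) = S ∧ ∀ k, μ (A k) ≤ c := by
  intro n
  induction n with
  | zero =>
    intro S hSm hSle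
    haveI : Nonempty (Fin (0 + 1)) := ⟨0⟩
    refine ⟨fun _ => S, fun _ => hSm, ?_, by rw [Set.iUnion_const], fun _ => by simpa using hSle⟩
    intro k l hkl
    exact absurd (Fin.ext (by omega)) hkl
  | succ n ih =>
    intro S hSm hSle
    rcases le_or_gt (μ S) c with h | h
    · refine ⟨Fin.cons S (fun _ => ∅), ?_, ?_, ?_, ?_⟩
      · intro k
        obtain rfl | ⟨i, rfl⟩ := k.eq_zero_or_eq_succ
        · simpa using hSm
        · simp
      · intro k l hkl
        obtain rfl | ⟨i, rfl⟩ := k.eq_zero_or_eq_succ <;>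
          obtain rfl | ⟨j, rfl⟩ := l.eq_zero_or_eq_succ <;>
          simp_all
      · ext ω
        simp [Fin.exists_fin_succ]
      · intro k
        obtain rfl | ⟨i, rfl⟩ := k.eq_zero_or_eq_succ
        · simpa using h
        · simp
    · obtain ⟨B, hBS, hBm, hB1, hB2⟩ := peel_lemma hμ hSm hc0 hct h
      have hc2t : c / 2 ≠ ∞ := (ENNReal.div_lt_top hct (by norm_num)).ne
      have hS' : μ (S \ B) ≤ c + n * (c / 2) := by
        rw [measure_diff hBS hBm.nullMeasurableSet (measure_ne_top μ B)]
        have heq : c + ((n : ℝ≥0∞) + 1) * (c / 2) = (c + (n : ℝ≥0∞) * (c / 2)) + c / 2 := by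
          ring
        calc μ S - μ B ≤ (c + ((n : ℕ) + 1 : ℕ) * (c / 2)) - c / 2 := tsub_le_tsub hSle hB1
          _ = c + (n : ℝ≥0∞) * (c / 2) := by
              push_cast
              rw [heq, ENNReal.add_sub_cancel_right hc2t]
      obtain ⟨A, h1, h2, h3, h4⟩ := ih (S \ B) (hSm.diff hBm) hS'
      have hAsub : ∀ j, A j ⊆ S \ B := fun j => h3 ▸ Set.subset_iUnion A j
      have hBd : ∀ j, Disjoint B (A j) :=
        fun j => Set.disjoint_sdiff_right.mono_right (hAsub j)
      refine ⟨(Fin.cons B A : Fin (n + 2) → Set Ω), ?_, ?_, ?_, ?_⟩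
      · intro k
        obtain rfl | ⟨i, rfl⟩ := k.eq_zero_or_eq_succ
        · simpa using hBm
        · simpa using h1 i
      · intro k l hkl
        obtain rfl | ⟨i, rfl⟩ := k.eq_zero_or_eq_succ <;>
          obtain rfl | ⟨j, rfl⟩ := l.eq_zero_or_eq_succ
        · exact absurd rfl hkl
        · simpa using hBd j
        · simpa using (hBd i).symm
        · simp only [Fin.cons_succ]
          exact h2 fun hij => hkl (by rw [hij])
      · have : (⋃ k, (Fin.cons B A : Fin (n + 2) → Set Ω) k) = B ∪ ⋃ j, A j := by
          ext ω
          simp [Fin.exists_fin_succ]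
        rw [this, h3, Set.union_diff_cancel hBS]
      · intro k
        obtain rfl | ⟨i, rfl⟩ := k.eq_zero_or_eq_succ
        · simpa using hB2
        · simpa using h4 i

/-- If `‖T 1_A‖ → 0` as `μ(A) → 0`, then `Ω` admits a finite measurable partition on
each piece of which `T` is uniformly small on signs. -/
theorem stmt_15 {Ω : Type*} [MeasurableSpace Ω] (μ : Measure Ω)
    [IsFiniteMeasure μ] (hμ : Atomless μ)
    (X : KotheFSpace Ω μ) (Y : Type*) [AddCommGroup Y] [Module ℝ Y]
    (FY : FSpaceNorm Y) (T : KOperator X Y FY)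
    (hind : ∀ ε > (0 : ℝ), ∃ δ > (0 : ℝ), ∀ A : Set Ω, MeasurableSet A →
      μ A ≤ ENNReal.ofReal δ →
      FY.norm (T.toFun (A.indicator fun _ => (1 : ℝ))) ≤ ε)
    (ε : ℝ) (hε : 0 < ε) :
    ∃ (n : ℕ) (A : Fin n → Set Ω),
      (∀ k, MeasurableSet (A k)) ∧
      (Pairwise fun k l => Disjoint (A k) (A l)) ∧
      (⋃ k, A k) = Set.univ ∧
      ∀ k, ∀ x : Ω → ℝ, IsSign x → Function.support x ⊆ A k →
        FY.norm (T.toFun x) ≤ ε := by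
    classical
  obtain ⟨δ, hδ0, hδ⟩ := hind (ε / 2) (by positivity)
  set c : ℝ≥0∞ := ENNReal.ofReal δ with hc
  have hc0 : 0 < c := ENNReal.ofReal_pos.mpr hδ0
  have hct : c ≠ ∞ := ENNReal.ofReal_ne_top
  have hc2 : (0 : ℝ≥0∞) < c / 2 := ENNReal.div_pos hc0.ne' (by norm_num)
  have hc2t : c / 2 ≠ ∞ := (ENNReal.div_lt_top hct (by norm_num)).ne
  obtain ⟨n, hn⟩ := ENNReal.exists_nat_gt
    ((ENNReal.div_lt_top (measure_ne_top μ Set.univ) hc2.ne').ne : μ Set.univ / (c / 2) ≠ ∞)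
  have huniv : μ Set.univ ≤ c + n * (c / 2) := by
    have : μ Set.univ < (n : ℝ≥0∞) * (c / 2) := by
      rwa [ENNReal.div_lt_iff (Or.inl hc2.ne') (Or.inl hc2t)] at hn
    exact this.le.trans (le_add_self)
  obtain ⟨A, h1, h2, h3, h4⟩ := partition_lemma hμ hc0 hct n Set.univ MeasurableSet.univ huniv
  refine ⟨n + 1, A, h1, h2, h3, ?_⟩
  intro k x hx hsupp
  obtain ⟨hxm, hxv⟩ := hx
  set P : Set Ω := x ⁻¹' {1} with hP
  set N : Set Ω := x ⁻¹' {-1} with hN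
  have hPm : MeasurableSet P := hxm (measurableSet_singleton 1)
  have hNm : MeasurableSet N := hxm (measurableSet_singleton (-1))
  have hPsub : P ⊆ A k := fun ω hω => hsupp (by
    simp only [Function.mem_support]
    simp only [hP, Set.mem_preimage, Set.mem_singleton_iff] at hω
    rw [hω]; norm_num)
  have hNsub : N ⊆ A k := fun ω hω => hsupp (by
    simp only [Function.mem_support]
    simp only [hN, Set.mem_preimage, Set.mem_singleton_iff] at hω
    rw [hω]; norm_num)
  have hPμ : μ P ≤ c := (measure_mono hPsub).trans (h4 k)
  have hNμ : μ N ≤ c := (measure_mono hNsub).trans (h4 k)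
  set fP : Ω → ℝ := P.indicator fun _ => 1 with hfP
  set fN : Ω → ℝ := N.indicator fun _ => 1 with hfN
  have hfPm : Measurable fP := measurable_const.indicator hPm
  have hfNm : Measurable fN := measurable_const.indicator hNm
  have hfPb : ∀ ω, |fP ω| ≤ |(fun _ => (1 : ℝ)) ω| := by
    intro ω
    by_cases h : ω ∈ P <;> simp [hfP, Set.indicator_apply, h]
  have hfNb : ∀ ω, |fN ω| ≤ |(fun _ => (1 : ℝ)) ω| := by
    intro ω
    by_cases h : ω ∈ N <;> simp [hfN, Set.indicator_apply, h]
  have hMemP : X.Mem fP := X.solid_mem fP _ hfPm X.one_mem hfPb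
  have hMemN : X.Mem fN := X.solid_mem fN _ hfNm X.one_mem hfNb
  have hMemN' : X.Mem ((-1 : ℝ) • fN) := X.smul_mem (-1) fN hMemN
  have hxsum : x = fP + (-1 : ℝ) • fN := by
    funext ω
    simp only [Pi.add_apply, Pi.smul_apply, smul_eq_mul, hfP, hfN,
      Set.indicator_apply, hP, hN, Set.mem_preimage, Set.mem_singleton_iff]
    rcases hxv ω with h | h | h <;> rw [h] <;> norm_num
  have hTP : FY.norm (T.toFun fP) ≤ ε / 2 := hδ P hPm hPμ
  have hTN : FY.norm (T.toFun fN) ≤ ε / 2 := hδ N hNm hNμ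
  calc FY.norm (T.toFun x)
      = FY.norm (T.toFun fP + T.toFun ((-1 : ℝ) • fN)) := by
        rw [hxsum, T.map_add fP ((-1 : ℝ) • fN) hMemP hMemN']
    _ ≤ FY.norm (T.toFun fP) + FY.norm (T.toFun ((-1 : ℝ) • fN)) := FY.add_le _ _
    _ ≤ FY.norm (T.toFun fP) + FY.norm (T.toFun fN) := by
        rw [T.map_smul (-1) fN hMemN]
        exact add_le_add_right (FY.smul_le (-1) _ (by norm_num)) _
    _ ≤ ε / 2 + ε / 2 := add_le_add hTP hTN
    _ = ε := by ring
end

section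
/- The conditional expectation operator P : L_∞([0,1]²) → L_∞([0,1]) defined by (Px)(t) = ∫_0^1 x(t,s) ds is a strictly narrow continuous linear operator: for every measurable A ⊆ [0,1]² of positive measure there exists a mean zero sign x on A with Px = 0. -/
open MeasureTheory

noncomputable section
namespace Stmt16Aux
open Set

def ν : Measure ℝ := volume.restrict (Set.Icc 0 1)

instance : IsFiniteMeasure ν := by
  constructor
  rw [ν, Measure.restrict_apply MeasurableSet.univ, Set.univ_inter, Real.volume_Icc]
  norm_num

variable (A : Set (ℝ × ℝ))

def m (t u : ℝ) : ℝ := (ν (Prod.mk t ⁻¹' A ∩ Iic u)).toReal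

def f (t : ℝ) : ℝ := (ν (Prod.mk t ⁻¹' A)).toReal

def S (t : ℝ) : Set ℝ := Icc (-1) 2 ∩ {u | f A t / 2 ≤ m A t u}

def g (t : ℝ) : ℝ := sInf (S A t)

variable {A}

lemma f_nonneg (t : ℝ) : 0 ≤ f A t := ENNReal.toReal_nonneg

lemma m_mono (t : ℝ) : Monotone (m A t) := by
  intro u v huv
  exact ENNReal.toReal_mono (measure_ne_top _ _)
    (measure_mono (inter_subset_inter_right _ (Iic_subset_Iic.2 huv)))

lemma m_le_f (t u : ℝ) : m A t u ≤ f A t :=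
  ENNReal.toReal_mono (measure_ne_top _ _) (measure_mono inter_subset_left)

lemma m_lip (t : ℝ) {u v : ℝ} (huv : u ≤ v) : m A t v ≤ m A t u + (v - u) := by
  have h1 : ν (Prod.mk t ⁻¹' A ∩ Iic v) ≤ ν (Prod.mk t ⁻¹' A ∩ Iic u) + ν (Ioc u v) := by
    refine le_trans (measure_mono ?_) (measure_union_le _ _)
    intro s hs
    rcases le_or_gt s u with h | h
    · exact Or.inl ⟨hs.1, h⟩
    · exact Or.inr ⟨h, hs.2⟩
  have h2 : ν (Ioc u v) ≤ ENNReal.ofReal (v - u) := by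
    rw [ν]
    refine le_trans (Measure.restrict_le_self _) ?_
    rw [Real.volume_Ioc]
  calc m A t v ≤ (ν (Prod.mk t ⁻¹' A ∩ Iic u) + ν (Ioc u v)).toReal :=
        ENNReal.toReal_mono (by finiteness) h1
    _ ≤ m A t u + (v - u) := by
        rw [ENNReal.toReal_add (measure_ne_top _ _) (measure_ne_top _ _)]
        refine add_le_add le_rfl ?_
        refine le_trans (ENNReal.toReal_mono (by finiteness) h2) ?_
        rw [ENNReal.toReal_ofReal (by linarith : (0:ℝ) ≤ v - u)]

lemma m_continuous (t : ℝ) : Continuous (m A t) := by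
  have : LipschitzWith 1 (m A t) := by
    apply LipschitzWith.of_dist_le_mul
    intro u v
    rw [Real.dist_eq, Real.dist_eq, NNReal.coe_one, one_mul]
    rcases le_total u v with h | h
    · have := m_lip (A := A) t h
      have := m_mono (A := A) t h
      rw [abs_le]; constructor <;> [linarith [abs_nonneg (u - v), le_abs_self (u-v), neg_abs_le (u-v)]; linarith [le_abs_self (u-v), neg_abs_le (u-v)]]
    · have := m_lip (A := A) t h
      have := m_mono (A := A) t h
      rw [abs_le]; constructor <;> [linarith [le_abs_self (u-v), neg_abs_le (u-v)]; linarith [le_abs_self (u-v), neg_abs_le (u-v)]]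
  exact this.continuous

lemma m_neg_one (t : ℝ) : m A t (-1) = 0 := by
  rw [m]
  have : ν (Prod.mk t ⁻¹' A ∩ Iic (-1)) = 0 := by
    refine measure_mono_null inter_subset_right ?_
    rw [ν, Measure.restrict_apply measurableSet_Iic]
    convert measure_empty
    · ext s; simp only [mem_inter_iff, mem_Iic, mem_Icc, mem_empty_iff_false, iff_false]
      rintro ⟨h1, h2⟩; linarith [h2.1]
    · infer_instance
  simp [this]

lemma m_two (t : ℝ) : m A t 2 = f A t := by
  rw [m, f]
  congr 1
  have hle : ν (Prod.mk t ⁻¹' A) ≤ ν (Prod.mk t ⁻¹' A ∩ Iic 2) + ν (Ioi 2) := by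
    refine le_trans (measure_mono ?_) (measure_union_le _ _)
    intro s hs
    rcases le_or_gt s 2 with h | h
    · exact Or.inl ⟨hs, h⟩
    · exact Or.inr h
  have h0 : ν (Ioi (2:ℝ)) = 0 := by
    rw [ν, Measure.restrict_apply measurableSet_Ioi]
    convert measure_empty
    · ext s; simp only [mem_inter_iff, mem_Ioi, mem_Icc, mem_empty_iff_false, iff_false]
      rintro ⟨h1, h2⟩; linarith [h2.2]
    · infer_instance
  refine le_antisymm (measure_mono inter_subset_left) ?_
  simpa [h0] using hle

lemma S_nonempty (t : ℝ) : (S A t).Nonempty := by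
  refine ⟨2, ⟨by norm_num, le_rfl⟩, ?_⟩
  rw [mem_setOf_eq, m_two]
  linarith [f_nonneg (A := A) t]

lemma S_bddBelow (t : ℝ) : BddBelow (S A t) := ⟨-1, fun u hu => hu.1.1⟩

lemma g_mem (hA : MeasurableSet A) (t : ℝ) : g A t ∈ S A t := by
  refine IsClosed.csInf_mem ?_ (S_nonempty t) (S_bddBelow t)
  exact isClosed_Icc.inter (isClosed_le continuous_const (m_continuous t))

lemma g_half (t : ℝ) : m A t (g A t) = f A t / 2 := by
  have hmem : g A t ∈ S A t := by
    refine IsClosed.csInf_mem ?_ (S_nonempty t) (S_bddBelow t)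
    exact isClosed_Icc.inter (isClosed_le continuous_const (m_continuous t))
  refine le_antisymm ?_ hmem.2
  refine le_of_forall_pos_le_add ?_
  intro ε hε
  rcases eq_or_lt_of_le hmem.1.1 with h | h
  · have h0 : m A t (g A t) = 0 := by
      rw [show g A t = -1 from h.symm]; exact m_neg_one t
    have h1 : f A t / 2 ≤ 0 := h0 ▸ hmem.2
    linarith [f_nonneg (A := A) t]
  · set u := max (-1) (g A t - ε) with hu
    have hult : u < g A t := max_lt h (by linarith)
    have hnot : u ∉ S A t := fun hmem' => absurd (csInf_le (S_bddBelow t) hmem') (not_le.2 hult)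
    have humem : u ∈ Icc (-1:ℝ) 2 := ⟨le_max_left _ _, le_trans hult.le hmem.1.2⟩
    have hlt : m A t u < f A t / 2 := by
      by_contra hcon
      exact hnot ⟨humem, not_lt.1 hcon⟩
    have hlip := m_lip (A := A) t hult.le
    have : g A t - u ≤ ε := by
      have := le_max_right (-1) (g A t - ε)
      simp only [hu]; linarith
    linarith

lemma g_le_iff (t : ℝ) {u : ℝ} (hu : -1 ≤ u) : g A t ≤ u ↔ f A t / 2 ≤ m A t u := by
  constructor
  · intro h
    calc f A t / 2 = m A t (g A t) := (g_half t).symm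
      _ ≤ m A t u := m_mono t h
  · intro h
    rcases le_or_gt u 2 with h2 | h2
    · exact csInf_le (S_bddBelow t) ⟨⟨hu, h2⟩, h⟩
    · have hmem : g A t ∈ S A t := by
        refine IsClosed.csInf_mem ?_ (S_nonempty t) (S_bddBelow t)
        exact isClosed_Icc.inter (isClosed_le continuous_const (m_continuous t))
      linarith [hmem.1.2]

lemma m_measurable (hA : MeasurableSet A) (u : ℝ) : Measurable (fun t => m A t u) := by
  have h : Measurable fun t => ν (Prod.mk t ⁻¹' (A ∩ univ ×ˢ Iic u)) :=
    measurable_measure_prodMk_left (hA.inter (MeasurableSet.univ.prod measurableSet_Iic))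
  have heq : ∀ t, Prod.mk t ⁻¹' (A ∩ univ ×ˢ Iic u) = Prod.mk t ⁻¹' A ∩ Iic u := by
    intro t; ext s; simp [Set.mem_prod]
  simp only [heq] at h
  exact h.ennreal_toReal

lemma f_measurable (hA : MeasurableSet A) : Measurable (f A) :=
  (measurable_measure_prodMk_left hA).ennreal_toReal

lemma g_measurable (hA : MeasurableSet A) : Measurable (g A) := by
  apply measurable_of_Iic
  intro u
  rcases lt_or_ge u (-1) with h | h
  · convert MeasurableSet.empty
    ext t
    simp only [mem_preimage, mem_Iic, mem_empty_iff_false, iff_false, not_le]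
    exact lt_of_lt_of_le h (g_mem hA t).1.1
  · have : g A ⁻¹' Iic u = {t | f A t / 2 ≤ m A t u} := by
      ext t; simp only [mem_preimage, mem_Iic, mem_setOf_eq]; exact g_le_iff t h
    rw [this]
    exact measurableSet_le ((f_measurable hA).div_const 2) (m_measurable hA u)

def x (A : Set (ℝ × ℝ)) : ℝ × ℝ → ℝ :=
  A.indicator (fun p => if p.2 ≤ g A p.1 then 1 else -1)

lemma x_measurable (hA : MeasurableSet A) : Measurable (x A) := by
  refine Measurable.indicator ?_ hA
  refine Measurable.ite ?_ measurable_const measurable_const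
  exact measurableSet_le measurable_snd ((g_measurable hA).comp measurable_fst)

lemma x_values (p : ℝ × ℝ) : x A p = -1 ∨ x A p = 0 ∨ x A p = 1 := by
  by_cases hp : p ∈ A <;> by_cases hg : p.2 ≤ g A p.1 <;>
    simp [x, Set.indicator_apply, hp, hg]

lemma x_ne_zero_iff (p : ℝ × ℝ) : x A p ≠ 0 ↔ p ∈ A := by
  by_cases hp : p ∈ A <;> by_cases hg : p.2 ≤ g A p.1 <;>
    simp [x, Set.indicator_apply, hp, hg]

lemma x_section_integral (hA : MeasurableSet A) (t : ℝ) :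
    ∫ s, x A (t, s) ∂ν = 0 := by
  set T := Prod.mk t ⁻¹' A with hT
  have hTm : MeasurableSet T := hA.preimage measurable_prodMk_left
  have hTm1 : MeasurableSet (T ∩ Iic (g A t)) := hTm.inter measurableSet_Iic
  have hTm2 : MeasurableSet (T \ Iic (g A t)) := hTm.diff measurableSet_Iic
  have hi1 : Integrable ((T ∩ Iic (g A t)).indicator (fun _ => (1:ℝ))) ν :=
    (integrable_const 1).indicator hTm1
  have hi2 : Integrable ((T \ Iic (g A t)).indicator (fun _ => (-1:ℝ))) ν :=
    (integrable_const (-1)).indicator hTm2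
  have hfun : ∫ s, x A (t, s) ∂ν =
      (∫ s, (T ∩ Iic (g A t)).indicator (fun _ => (1:ℝ)) s ∂ν) +
        ∫ s, (T \ Iic (g A t)).indicator (fun _ => (-1:ℝ)) s ∂ν := by
    rw [← integral_add hi1 hi2]
    refine integral_congr_ae (ae_of_all _ fun s => ?_)
    by_cases hsA : (t, s) ∈ A <;> by_cases hsg : s ≤ g A t <;>
      simp [x, Set.indicator_apply, hsA, hsg, hT, Set.mem_preimage, Set.mem_Iic]
  rw [hfun, integral_indicator_const _ hTm1, integral_indicator_const _ hTm2]
  have hsplit : (ν (T ∩ Iic (g A t))).toReal + (ν (T \ Iic (g A t))).toReal = f A t := by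
    rw [f, ← ENNReal.toReal_add (measure_ne_top _ _) (measure_ne_top _ _),
      measure_inter_add_diff _ measurableSet_Iic]
  have hhalf := g_half (A := A) t
  rw [m] at hhalf
  rw [← hT] at hhalf
  rw [smul_eq_mul, smul_eq_mul, mul_one]
  rw [measureReal_def, measureReal_def]
  linarith

lemma x_memLp (hA : MeasurableSet A) : MemLp (x A) ⊤ (ν.prod ν) := by
  refine memLp_top_of_bound (x_measurable hA).aestronglyMeasurable 1 (ae_of_all _ fun p => ?_)
  rcases x_values (A := A) p with h | h | h <;> rw [h] <;> norm_num

lemma x_integral_zero (hA : MeasurableSet A) : ∫ p, x A p ∂(ν.prod ν) = 0 := by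
  have hint : Integrable (x A) (ν.prod ν) := (x_memLp hA).integrable le_top
  rw [integral_prod _ hint]
  simp only [x_section_integral hA, integral_zero]

end Stmt16Aux
end

open Stmt16Aux

/-- The conditional expectation `P : L_∞([0,1]²) → L_∞([0,1])`,
`(Px)(t) = ∫₀¹ x(t,s) ds`, is strictly narrow: any continuous linear operator
satisfying this formula admits, for every measurable `A ⊆ [0,1]²` of positive
measure, a mean zero sign on `A` in its kernel. -/
theorem stmt_16
    (P : Lp ℝ ⊤ (volume.restrict (Set.Icc (0 : ℝ) 1 ×ˢ Set.Icc (0 : ℝ) 1)) →L[ℝ]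
      Lp ℝ ⊤ (volume.restrict (Set.Icc (0 : ℝ) 1)))
    (hP : ∀ x : Lp ℝ ⊤ (volume.restrict (Set.Icc (0 : ℝ) 1 ×ˢ Set.Icc (0 : ℝ) 1)),
      (P x : ℝ → ℝ) =ᵐ[volume.restrict (Set.Icc (0 : ℝ) 1)]
        fun t => ∫ s in Set.Icc (0 : ℝ) 1, x (t, s)) :
    ∀ A : Set (ℝ × ℝ), MeasurableSet A →
      0 < volume.restrict (Set.Icc (0 : ℝ) 1 ×ˢ Set.Icc (0 : ℝ) 1) A →
      ∃ x : ℝ × ℝ → ℝ, Measurable x ∧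
        (∀ p, x p = -1 ∨ x p = 0 ∨ x p = 1) ∧
        (∀ᵐ p ∂(volume.restrict (Set.Icc (0 : ℝ) 1 ×ˢ Set.Icc (0 : ℝ) 1)),
          x p ≠ 0 ↔ p ∈ A) ∧
        (∫ p, x p ∂(volume.restrict (Set.Icc (0 : ℝ) 1 ×ˢ Set.Icc (0 : ℝ) 1)) = 0) ∧
        ∃ hx : MemLp x ⊤ (volume.restrict (Set.Icc (0 : ℝ) 1 ×ˢ Set.Icc (0 : ℝ) 1)),
          P (hx.toLp x) = 0 := by
  have hμ : volume.restrict (Set.Icc (0 : ℝ) 1 ×ˢ Set.Icc (0 : ℝ) 1) =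
      Stmt16Aux.ν.prod Stmt16Aux.ν := by
    rw [Stmt16Aux.ν, Measure.prod_restrict, ← Measure.volume_eq_prod]
  intro A hA _
  refine ⟨Stmt16Aux.x A, x_measurable hA, fun p => x_values p, ?_, ?_, ?_⟩
  · exact ae_of_all _ fun p => x_ne_zero_iff p
  · rw [hμ]; exact x_integral_zero hA
  · have hx : MemLp (Stmt16Aux.x A) ⊤
        (volume.restrict (Set.Icc (0 : ℝ) 1 ×ˢ Set.Icc (0 : ℝ) 1)) := by
      rw [hμ]; exact x_memLp hA
    refine ⟨hx, ?_⟩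
    set y := hx.toLp (Stmt16Aux.x A) with hy
    refine Lp.ext ((hP y).trans ?_ |>.trans (Lp.coeFn_zero ℝ ⊤ _).symm)
    have hyx : (y : ℝ × ℝ → ℝ) =ᵐ[Stmt16Aux.ν.prod Stmt16Aux.ν] Stmt16Aux.x A := by
      rw [← hμ]; exact MemLp.coeFn_toLp hx
    have hae := Measure.ae_ae_of_ae_prod hyx
    have hν : volume.restrict (Set.Icc (0 : ℝ) 1) = Stmt16Aux.ν := rfl
    rw [hν]
    filter_upwards [hae] with t ht
    rw [show (∫ s, (y : ℝ × ℝ → ℝ) (t, s) ∂Stmt16Aux.ν) =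
        ∫ s, Stmt16Aux.x A (t, s) ∂Stmt16Aux.ν from integral_congr_ae ht]
    exact x_section_integral hA t
end
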